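/- arXiv:1603.00426 — 12 statements merged into one kernel-verified Lean document; each statement's English description precedes it below -/
import Mathlib

section
/- Let k be a field, K a field extension of k, and μ ∈ K with μ ≠ 0. Let S = {f ∈ k[X] : f̄(X + μ) = f̄(X)}, where f̄ denotes the image of f in K[X] under the coefficient embedding and f̄(X+μ) is the composition of f̄ with X + C μ. If g ∈ S is nonconstant and has minimal degree among all nonconstant elements of S, then S equals Algebra.adjoin k {g}, the k-subalgebra of k[X] generated by g. -/
open Polynomial

/- Let `σ` be the ring endomorphism `p ↦ p(X + μ)` of `K[X]`. It preserves degrees, so applying `σ`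
to a division `F = R + G Q` by a `σ`-fixed monic `G` gives another division of `F` with remainder,
and uniqueness makes the quotient `σ`-fixed. Hence the fixed polynomials in `k[X]` form a
subalgebra closed under division by its monic elements. In such a subalgebra, dividing by a monic
element `g` of least positive degree leaves a remainder in the subalgebra of smaller degree, hence
a constant, and induction on the degree expresses every element as a polynomial in `g`. -/

section CompFixed

variable {R : Type*} [CommRing R] [NoZeroDivisors R]

theorem divByMonic_comp_eq_of_comp_eq {F G q : R[X]} (hq : q.degree = 1) (hG : G.Monic)
    (hGq : G.comp q = G) (hFq : F.comp q = F) : (F /ₘ G).comp q = F /ₘ G := by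
  nontriviality R
  refine (div_modByMonic_unique _ ((F %ₘ G).comp q) hG ⟨?_, ?_⟩).1.symm
  · conv_rhs => rw [← hFq, ← modByMonic_add_div F G]
    rw [add_comp, mul_comp, hGq]
  · rw [degree_comp (by rw [hq]; exact zero_lt_one), hq, mul_one]
    exact degree_modByMonic_lt F hG

end CompFixed

section CompFixedSubalgebra

variable (k : Type*) {K : Type*} [Field k] [CommRing K] [Algebra k K]

def compFixedSubalgebra (q : K[X]) : Subalgebra k k[X] where
  carrier := {f | (f.map (algebraMap k K)).comp q = f.map (algebraMap k K)}
  mul_mem' hf hg := by simp_all [mul_comp]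
  add_mem' hf hg := by simp_all [add_comp]
  algebraMap_mem' a := by simp

variable {k}

theorem divByMonic_mem_compFixedSubalgebra [NoZeroDivisors K] {q : K[X]} (hq : q.degree = 1)
    {f g : k[X]} (hf : f ∈ compFixedSubalgebra k q) (hg : g ∈ compFixedSubalgebra k q)
    (hmonic : g.Monic) : f /ₘ g ∈ compFixedSubalgebra k q := by
  change ((f /ₘ g).map _).comp q = (f /ₘ g).map _
  rw [map_divByMonic _ hmonic]
  exact divByMonic_comp_eq_of_comp_eq hq (hmonic.map _) hg hf

end CompFixedSubalgebra

section DivisionClosed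

variable {k : Type*} [Field k]

theorem Subalgebra.eq_adjoin_of_natDegree_minimal (A : Subalgebra k k[X])
    (hdiv : ∀ {f g}, f ∈ A → g ∈ A → g.Monic → f /ₘ g ∈ A) {g : k[X]} (hg : g ∈ A)
    (hgdeg : 1 ≤ g.natDegree) (hmin : ∀ f ∈ A, 1 ≤ f.natDegree → g.natDegree ≤ f.natDegree) :
    A = Algebra.adjoin k {g} := by
  refine le_antisymm (fun f hf => ?_) (Algebra.adjoin_le (Set.singleton_subset_iff.mpr hg))
  have hg0 : g ≠ 0 := ne_zero_of_natDegree_gt hgdeg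
  set g₁ := g * C g.leadingCoeff⁻¹
  have hg₁ : g₁.Monic := monic_mul_leadingCoeff_inv hg0
  have hg₁deg : g₁.natDegree = g.natDegree :=
    natDegree_mul_C (inv_ne_zero (leadingCoeff_ne_zero.mpr hg0))
  have hg₁A : g₁ ∈ A := mul_mem hg (A.algebraMap_mem _)
  have hg₁adj : g₁ ∈ Algebra.adjoin k {g} :=
    mul_mem (Algebra.self_mem_adjoin_singleton k g) (Subalgebra.algebraMap_mem _ _)
  induction hn : f.natDegree using Nat.strong_induction_on generalizing f with
  | _ n ih =>
    rcases Nat.eq_zero_or_pos n with rfl | hpos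
    · rw [eq_C_of_natDegree_eq_zero hn]
      exact Subalgebra.algebraMap_mem _ _
    have hqA : f /ₘ g₁ ∈ A := hdiv hf hg₁A hg₁
    have hrA : f %ₘ g₁ ∈ A := by
      rw [modByMonic_eq_sub_mul_div]
      exact sub_mem hf (mul_mem hg₁A hqA)
    have hr : (f %ₘ g₁).natDegree = 0 := by
      by_contra hr
      have hlt := natDegree_lt_natDegree (fun h => hr (by rw [h, natDegree_zero]))
        (degree_modByMonic_lt f hg₁)
      have := hmin _ hrA (Nat.one_le_iff_ne_zero.mpr hr)
      omega
    have hq : f /ₘ g₁ ∈ Algebra.adjoin k {g} := by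
      refine ih _ ?_ _ hqA rfl
      rw [natDegree_divByMonic f hg₁]
      omega
    rw [← modByMonic_add_div f g₁, eq_C_of_natDegree_eq_zero hr]
    exact add_mem (Subalgebra.algebraMap_mem _ _) (mul_mem hg₁adj hq)

end DivisionClosed

theorem stmt0_general (k K : Type*) [Field k] [Field K] [Algebra k K] (μ : K)
    (S : Set (Polynomial k))
    (hS : S = {f : Polynomial k |
      (f.map (algebraMap k K)).comp (X + C μ) = f.map (algebraMap k K)})
    (g : Polynomial k) (hg : g ∈ S) (hgdeg : 1 ≤ g.natDegree)
    (hmin : ∀ f ∈ S, 1 ≤ f.natDegree → g.natDegree ≤ f.natDegree) :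
    S = (Algebra.adjoin k {g} : Subalgebra k (Polynomial k)) := by
  subst hS
  exact congrArg SetLike.coe <| (compFixedSubalgebra k (X + C μ)).eq_adjoin_of_natDegree_minimal
    (divByMonic_mem_compFixedSubalgebra (degree_X_add_C μ)) hg hgdeg hmin

theorem stmt0 (k K : Type*) [Field k] [Field K] [Algebra k K] (μ : K) (hμ : μ ≠ 0)
    (S : Set (Polynomial k))
    (hS : S = {f : Polynomial k |
      (f.map (algebraMap k K)).comp (X + C μ) = f.map (algebraMap k K)})
    (g : Polynomial k) (hg : g ∈ S) (hgdeg : 1 ≤ g.natDegree)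
    (hmin : ∀ f ∈ S, 1 ≤ f.natDegree → g.natDegree ≤ f.natDegree) :
    S = (Algebra.adjoin k {g} : Subalgebra k (Polynomial k)) :=
  stmt0_general k K μ S hS g hg hgdeg hmin
end

section
/- Let p be a prime and μ ∈ ZMod p with μ ≠ 0. Then the set {f ∈ (ZMod p)[X] : f.comp (X + C μ) = f} equals Algebra.adjoin (ZMod p) {X^p − X}, the subalgebra of (ZMod p)[X] generated by the polynomial X^p − X. -/
/-!
Write `g = X ^ q - X` over a finite field with `q` elements. Since `(X + c) ^ q = X ^ q + c` and
`c ^ q = c`, `g` is invariant under every translation `X ↦ X + c`. Conversely, if `f` is invariant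
under all translations then so are the quotient and remainder of `f` by the monic `g`, by
uniqueness of division; a remainder of degree `< q` takes the same value at every point and is
therefore constant, and induction on the degree puts `f` in `K[g]`. Over `ZMod p`, invariance
under one translation `μ ≠ 0` gives invariance under all multiples of `μ`, i.e. under all of
`ZMod p`.
-/

open Polynomial

namespace Polynomial

variable {R : Type*}

theorem taylor_nsmul_eq_self [CommSemiring R] {f : R[X]} {r : R} (hf : taylor r f = f) (n : ℕ) :
    taylor (n • r) f = f := by
  induction n with
  | zero => rw [zero_smul, taylor_zero]
  | succ n ih => rw [succ_nsmul, ← taylor_taylor, hf, ih]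

theorem taylor_divByMonic_eq_self_and_taylor_modByMonic_eq_self [CommRing R] {f g : R[X]} {r : R}
    (hg : g.Monic) (hgr : taylor r g = g) (hfr : taylor r f = f) :
    taylor r (f /ₘ g) = f /ₘ g ∧ taylor r (f %ₘ g) = f %ₘ g := by
  nontriviality R
  have hdecomp : taylor r (f %ₘ g) + g * taylor r (f /ₘ g) = f := by
    conv_rhs => rw [← hfr, ← modByMonic_add_div f g, map_add, taylor_mul, hgr]
  have hdeg : (taylor r (f %ₘ g)).degree < g.degree := by
    rw [degree_taylor]
    exact degree_modByMonic_lt f hg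
  obtain ⟨hdiv, hmod⟩ := div_modByMonic_unique _ _ hg ⟨hdecomp, hdeg⟩
  exact ⟨hdiv.symm, hmod.symm⟩

theorem eq_C_eval_zero_of_forall_taylor_eq_self [CommRing R] [IsDomain R] [Fintype R] {f : R[X]}
    (hf : ∀ r, taylor r f = f) (hdeg : f.natDegree < Fintype.card R) : f = C (f.eval 0) := by
  refine eq_of_natDegree_lt_card_of_eval_eq _ _ Function.injective_id (fun r ↦ ?_) ?_
  · rw [eval_C, id, ← zero_add r, ← taylor_eval, hf]
  · simpa using hdeg

end Polynomial

namespace FiniteField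

variable {K : Type*} [Field K] [Fintype K]

theorem taylor_X_pow_card_sub_X (c : K) :
    taylor c (X ^ Fintype.card K - X : K[X]) = X ^ Fintype.card K - X := by
  rw [map_sub, taylor_X_pow, taylor_X, ← expand_card, map_add, expand_X, expand_C]
  ring

theorem mem_adjoin_X_pow_card_sub_X_of_forall_taylor_eq_self {f : K[X]}
    (hf : ∀ c, taylor c f = f) : f ∈ Algebra.adjoin K {(X ^ Fintype.card K - X : K[X])} := by
  set g : K[X] := X ^ Fintype.card K - X
  have hcard : 1 < Fintype.card K := Fintype.one_lt_card
  have hg : g.Monic := monic_X_pow_sub (by rw [degree_X]; exact_mod_cast hcard)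
  have hgdeg : g.natDegree = Fintype.card K := X_pow_card_sub_X_natDegree_eq K hcard
  induction hn : f.natDegree using Nat.strong_induction_on generalizing f with
  | _ n ih =>
  by_cases hsmall : n < Fintype.card K
  · rw [eq_C_eval_zero_of_forall_taylor_eq_self hf (hn ▸ hsmall)]
    exact Subalgebra.algebraMap_mem _ _
  have hinv c := taylor_divByMonic_eq_self_and_taylor_modByMonic_eq_self hg
    (taylor_X_pow_card_sub_X c) (hf c)
  have hdiv : f /ₘ g ∈ Algebra.adjoin K {g} :=
    ih _ (by rw [← hn, natDegree_divByMonic f hg, hgdeg]; omega) (fun c ↦ (hinv c).1) rfl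
  have hmod : f %ₘ g ∈ Algebra.adjoin K {g} := by
    refine ih _ ?_ (fun c ↦ (hinv c).2) rfl
    have := natDegree_modByMonic_lt f hg (fun h ↦ by simp [h] at hgdeg; omega)
    omega
  rw [← modByMonic_add_div f g]
  exact add_mem hmod (mul_mem (Algebra.self_mem_adjoin_singleton K g) hdiv)

theorem mem_adjoin_X_pow_card_sub_X_iff {f : K[X]} :
    f ∈ Algebra.adjoin K {(X ^ Fintype.card K - X : K[X])} ↔ ∀ c, taylor c f = f := by
  refine ⟨fun hf c ↦ ?_, mem_adjoin_X_pow_card_sub_X_of_forall_taylor_eq_self⟩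
  have hle : Algebra.adjoin K {(X ^ Fintype.card K - X : K[X])} ≤
      AlgHom.equalizer (taylorAlgHom c) (AlgHom.id K K[X]) := by
    rw [Algebra.adjoin_le_iff, Set.singleton_subset_iff]
    exact taylor_X_pow_card_sub_X c
  exact hle hf

end FiniteField

theorem ZMod.forall_taylor_eq_self_iff {p : ℕ} [Fact p.Prime] {μ : ZMod p} (hμ : μ ≠ 0)
    {f : (ZMod p)[X]} : (∀ c, taylor c f = f) ↔ taylor μ f = f := by
  refine ⟨fun hf ↦ hf μ, fun hf c ↦ ?_⟩
  have hc : c = (c / μ).val • μ := by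
    rw [nsmul_eq_mul, ZMod.natCast_zmod_val, div_mul_cancel₀ c hμ]
  rw [hc]
  exact taylor_nsmul_eq_self hf _

theorem stmt1 (p : ℕ) [Fact p.Prime] (μ : ZMod p) (hμ : μ ≠ 0) :
    {f : Polynomial (ZMod p) | f.comp (X + C μ) = f} =
      (Algebra.adjoin (ZMod p) {(X : Polynomial (ZMod p)) ^ p - X} :
        Subalgebra (ZMod p) (Polynomial (ZMod p))) := by
  ext f
  rw [Set.mem_ofPred_eq, SetLike.mem_coe, ← taylor_apply, ← ZMod.forall_taylor_eq_self_iff hμ,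
    ← FiniteField.mem_adjoin_X_pow_card_sub_X_iff, ZMod.card]
end

section
/- Let p be a prime, d ≥ 1, and m ∈ (ZMod p)[X] a monic irreducible polynomial of degree d with m ≠ X. Let K = AdjoinRoot m and μ = AdjoinRoot.root m. Then every element of Algebra.adjoin (ZMod p) {X^{p^d} − X} lies in the set S = {f ∈ (ZMod p)[X] : (f.map (algebraMap (ZMod p) K)).comp (X + C μ) = f.map (algebraMap (ZMod p) K)}, while for every i with 1 ≤ i < d the polynomial X^{p^i} − X does not lie in S. -/
open Polynomial

theorem stmt2 (p : ℕ) [Fact p.Prime] (d : ℕ) (hd : 1 ≤ d)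
    (m : Polynomial (ZMod p)) (hmonic : m.Monic) (hirr : Irreducible m)
    (hdeg : m.natDegree = d) (hmX : m ≠ X)
    (S : Set (Polynomial (ZMod p)))
    (hS : S = {f : Polynomial (ZMod p) |
      (f.map (algebraMap (ZMod p) (AdjoinRoot m))).comp (X + C (AdjoinRoot.root m)) =
        f.map (algebraMap (ZMod p) (AdjoinRoot m))}) :
    (∀ f ∈ (Algebra.adjoin (ZMod p) {(X : Polynomial (ZMod p)) ^ p ^ d - X} :
        Subalgebra (ZMod p) (Polynomial (ZMod p))), f ∈ S) ∧
    (∀ i : ℕ, 1 ≤ i → i < d → ((X : Polynomial (ZMod p)) ^ p ^ i - X) ∉ S) := by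
  haveI := Fact.mk hirr
  set K := AdjoinRoot m
  set μ := AdjoinRoot.root m
  haveI : Module.Finite (ZMod p) K := PowerBasis.finite (AdjoinRoot.powerBasis hirr.ne_zero)
  haveI : Finite K := Module.finite_of_finite (ZMod p)
  haveI : Fintype K := Fintype.ofFinite _
  haveI hcharK : CharP K p :=
    charP_of_injective_algebraMap (algebraMap (ZMod p) K).injective p
  have hcard : Fintype.card K = p ^ d := by
    have h2 := Module.card_fintype (AdjoinRoot.powerBasis hirr.ne_zero).basis
    simpa [ZMod.card, AdjoinRoot.powerBasis, hdeg] using h2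
  have hψ : ∀ f : Polynomial (ZMod p),
      (Polynomial.aeval (X + C μ) f : Polynomial K)
        = (f.map (algebraMap (ZMod p) K)).comp (X + C μ) := by
    intro f
    rw [Polynomial.aeval_def, Polynomial.comp, Polynomial.eval₂_map]
    exact Polynomial.eval₂_congr (RingHom.ext fun r => by
      simp [Polynomial.algebraMap_apply]) rfl rfl
  have hψ₂ : ∀ f : Polynomial (ZMod p),
      (Polynomial.mapAlgHom (Algebra.ofId (ZMod p) K)) f
        = f.map (algebraMap (ZMod p) K) := by
    intro f; simp [Polynomial.mapAlgHom]
  constructor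
  · -- part 1
    have hgen : ((X : Polynomial (ZMod p)) ^ p ^ d - X) ∈
        AlgHom.equalizer (Polynomial.aeval (X + C μ) : Polynomial (ZMod p) →ₐ[ZMod p] Polynomial K)
          (Polynomial.mapAlgHom (Algebra.ofId (ZMod p) K)) := by
      show (Polynomial.aeval (X + C μ)) _ = _
      rw [hψ₂]
      have hμ : μ ^ p ^ d = μ := by
        have := FiniteField.pow_card μ
        rwa [hcard] at this
      have hfrob : ((X : Polynomial K) + C μ) ^ p ^ d = X ^ p ^ d + C μ := by
        rw [add_pow_char_pow, ← C_pow, hμ]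
      simp only [map_sub, map_pow, Polynomial.aeval_X, hfrob]
      push_cast [Polynomial.map_sub, Polynomial.map_pow, Polynomial.map_X]
      ring
    intro f hf
    rw [hS]
    have hle : Algebra.adjoin (ZMod p) {(X : Polynomial (ZMod p)) ^ p ^ d - X} ≤
        AlgHom.equalizer (Polynomial.aeval (X + C μ)) (Polynomial.mapAlgHom (Algebra.ofId (ZMod p) K)) := by
      rw [Algebra.adjoin_le_iff]
      simpa using hgen
    have := hle hf
    have heq : (Polynomial.aeval (X + C μ)) f = (Polynomial.mapAlgHom (Algebra.ofId (ZMod p) K)) f := this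
    rw [hψ, hψ₂] at heq
    exact heq
  · -- part 2
    intro i hi1 hid hmem
    rw [hS] at hmem
    have hμ : μ ^ p ^ i = μ := by
      have := congrArg (Polynomial.eval (0 : K)) hmem
      have hpi : (0:K) ^ p ^ i = 0 := zero_pow (pow_ne_zero i (Fact.out : p.Prime).ne_zero)
      simp [Polynomial.eval_comp, Polynomial.map_sub, Polynomial.map_pow, hpi] at this
      linear_combination this
    -- every element of K satisfies x ^ p ^ i = x
    have hall : ∀ x : K, x ^ p ^ i = x := by
      intro x
      have hx : x ∈ Algebra.adjoin (ZMod p) ({μ} : Set K) := by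
        rw [AdjoinRoot.adjoinRoot_eq_top]; trivial
      induction hx using Algebra.adjoin_induction with
      | mem y hy => simp at hy; rw [hy]; exact hμ
      | algebraMap r =>
          rw [← map_pow]
          congr 1
          exact ZMod.pow_card_pow r
      | add a b _ _ ha hb => rw [add_pow_char_pow, ha, hb]
      | mul a b _ _ ha hb => rw [mul_pow, ha, hb]
    -- the polynomial X^(p^i) - X has too many roots
    set q : Polynomial K := X ^ p ^ i - X with hq
    have hdegq : q.natDegree = p ^ i := by
      rw [hq]
      have h1 : (X : Polynomial K).natDegree < ((X : Polynomial K) ^ p ^ i).natDegree := by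
        rw [natDegree_X, natDegree_X_pow]
        exact Nat.one_lt_pow (by omega) (Fact.out : p.Prime).one_lt
      rw [natDegree_sub_eq_left_of_natDegree_lt h1, natDegree_X_pow]
    have hq0 : q ≠ 0 := by
      intro h
      rw [h, Polynomial.natDegree_zero] at hdegq
      exact (pow_ne_zero i (Fact.out : p.Prime).ne_zero) hdegq.symm
    have hsub : Finset.univ ⊆ q.roots.toFinset := by
      intro x _
      rw [Multiset.mem_toFinset, Polynomial.mem_roots hq0]
      simp [hq, Polynomial.IsRoot, hall x]
    have hcardle : Fintype.card K ≤ p ^ i := by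
      calc Fintype.card K = Finset.univ.card := (Finset.card_univ (α := K)).symm
        _ ≤ q.roots.toFinset.card := Finset.card_le_card hsub
        _ ≤ Multiset.card q.roots := q.roots.toFinset_card_le
        _ ≤ q.natDegree := Polynomial.card_roots' q
        _ = p ^ i := hdegq
    rw [hcard] at hcardle
    have : p ^ d < p ^ d :=
      lt_of_le_of_lt hcardle (Nat.pow_lt_pow_right (Fact.out : p.Prime).one_lt hid)
    omega
end

section
/- Let p be a prime and d ≥ 1. Then, as an equality of integers, (p·d) times the number of monic irreducible polynomials m ∈ (ZMod p)[X] of degree d with m.coeff (d−1) ≠ 0 equals (p−1) · Σ_{k ∣ d, p ∤ k} μ(k) · p^{d/k}, where the sum runs over the positive divisors k of d not divisible by p and μ is the Möbius function. -/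
/-!
Let `L` be the extension of degree `e` of a finite field `K` of characteristic `p`. If the minimal
polynomial `m` of `x : L` has degree `k`, then `k ∣ e` and `trace x = (e / k) • (-m.coeff (k - 1))`;
conversely every monic irreducible `m` of degree `k ∣ e` is the minimal polynomial of exactly `k`
elements of `L`. The trace is a surjective linear form, so counting the elements of nonzero trace
gives `∑_{k ∣ e, p ∤ e / k} k N(k) = q^e - q^(e - 1)` for all `e ≥ 1`, where `q = |K|` and `N(k)`
counts the monic irreducible `m` of degree `k` with `m.coeff (k - 1) ≠ 0`. The left side is the
Dirichlet convolution of `k N(k)` with the indicator of `p ∤ n`; this indicator is completely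
multiplicative, so its Dirichlet inverse is `μ` times it, which inverts the identity.
-/

open Polynomial Module IntermediateField

section MinpolyCount

variable {K L : Type*} [Field K] [Field L] [Algebra K L] [Finite L]

theorem natCard_minpoly_eq {m : K[X]} (hm : m.Monic) (hirr : Irreducible m)
    (hdvd : m.natDegree ∣ finrank K L) : Nat.card {x : L // minpoly K x = m} = m.natDegree := by
  have := Fact.mk hirr
  have hroot : ∀ x : L, minpoly K x = m ↔ x ∈ m.aroots L := fun x => by
    rw [mem_aroots]
    refine ⟨?_, fun ⟨_, hx⟩ => (minpoly.eq_of_irreducible_of_monic hirr hx hm).symm⟩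
    rintro rfl
    exact ⟨minpoly.ne_zero (.of_finite K x), minpoly.aeval K x⟩
  have hrank : finrank K (AdjoinRoot m) = m.natDegree := (AdjoinRoot.powerBasis hm.ne_zero).finrank
  rw [Nat.card_congr ((Equiv.subtypeEquivRight hroot).trans
      (AdjoinRoot.equiv L K m hm.ne_zero).symm),
    FiniteField.natCard_algHom_of_finrank_dvd (hrank ▸ hdvd), hrank]

theorem natCard_minpoly_natDegree_eq (P : K[X] → Prop) {k : ℕ} (hk : k ∣ finrank K L) :
    Nat.card {x : L // (minpoly K x).natDegree = k ∧ P (minpoly K x)} =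
      k * Nat.card {m : K[X] // m.Monic ∧ Irreducible m ∧ m.natDegree = k ∧ P m} := by
  set Q : K[X] → Prop := fun m => m.Monic ∧ Irreducible m ∧ m.natDegree = k ∧ P m
  have hQ : ∀ x : L, (minpoly K x).natDegree = k ∧ P (minpoly K x) ↔ Q (minpoly K x) := fun x =>
    ⟨fun h => ⟨minpoly.monic (.of_finite K x), minpoly.irreducible (.of_finite K x), h⟩,
      fun h => h.2.2⟩
  have hfiber (m : Subtype Q) : Nat.card {x : L // minpoly K x = m} = k := by
    obtain ⟨m, hm, hirr, rfl, -⟩ := m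
    exact natCard_minpoly_eq hm hirr hk
  let e := Equiv.sigmaSubtypeFiberEquivSubtype (minpoly K) hQ
  have : Finite (Σ m : Subtype Q, {x : L // minpoly K x = m}) := Finite.of_equiv _ e.symm
  have hk0 : 0 < k := Nat.pos_of_dvd_of_pos hk finrank_pos
  have : Finite (Subtype Q) := Finite.of_surjective Sigma.fst fun m => by
    obtain ⟨x⟩ := (Nat.card_pos_iff.1 ((hfiber m).symm ▸ hk0)).1
    exact ⟨⟨m, x⟩, rfl⟩
  have := Fintype.ofFinite (Subtype Q)
  rw [← Nat.card_congr e, Nat.card_sigma, Finset.sum_congr rfl fun m _ => hfiber m,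
    Finset.sum_const, Finset.card_univ, ← Nat.card_eq_fintype_card, smul_eq_mul, mul_comm]

theorem natCard_minpoly_eq_sum_divisors (P : K[X] → Prop) :
    Nat.card {x : L // P (minpoly K x)} = ∑ k ∈ (finrank K L).divisors,
      k * Nat.card {m : K[X] // m.Monic ∧ Irreducible m ∧ m.natDegree = k ∧ P m} := by
  classical
  have := Fintype.ofFinite L
  have hdeg : ∀ x ∈ Finset.univ.filter (fun x : L => P (minpoly K x)),
      (minpoly K x).natDegree ∈ (finrank K L).divisors := fun x _ =>
    Nat.mem_divisors.2 ⟨minpoly.degree_dvd (.of_finite K x), finrank_pos.ne'⟩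
  rw [Nat.card_eq_fintype_card, Fintype.card_subtype, Finset.card_eq_sum_card_fiberwise hdeg]
  refine Finset.sum_congr rfl fun k hk => ?_
  rw [← natCard_minpoly_natDegree_eq P (Nat.dvd_of_mem_divisors hk), Nat.card_eq_fintype_card,
    Fintype.card_subtype, Finset.filter_filter]
  simp only [and_comm]

end MinpolyCount

section Trace

variable {K L : Type*} [Field K] [Field L] [Algebra K L]

theorem trace_eq_finrank_div_natDegree_mul_nextCoeff [FiniteDimensional K L] (x : L) :
    Algebra.trace K L x =
      ((finrank K L / (minpoly K x).natDegree : ℕ) : K) * -(minpoly K x).nextCoeff := by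
  have htower := Module.finrank_mul_finrank K K⟮x⟯ L
  rw [trace_eq_finrank_mul_minpoly_nextCoeff, ← IntermediateField.adjoin.finrank (.of_finite K x),
    ← htower, Nat.mul_div_cancel_left _ finrank_pos]

theorem trace_ne_zero_iff_of_charP (p : ℕ) [CharP K p] [FiniteDimensional K L] (x : L) :
    Algebra.trace K L x ≠ 0 ↔ ¬ p ∣ finrank K L / (minpoly K x).natDegree ∧
      (minpoly K x).coeff ((minpoly K x).natDegree - 1) ≠ 0 := by
  rw [trace_eq_finrank_div_natDegree_mul_nextCoeff, mul_ne_zero_iff, neg_ne_zero, Ne,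
    CharP.cast_eq_zero_iff K p, nextCoeff_of_natDegree_pos (minpoly.natDegree_pos (.of_finite K x))]

theorem natCard_trace_ne_zero_mul [Finite L] :
    Nat.card {x : L // Algebra.trace K L x ≠ 0} * Nat.card K = Nat.card L * (Nat.card K - 1) := by
  classical
  have : Finite K := Finite.of_injective _ (algebraMap K L).injective
  have hker : Nat.card {x : L // Algebra.trace K L x = 0} * Nat.card K = Nat.card L := by
    have hrank := LinearMap.finrank_range_add_finrank_ker (Algebra.trace K L)
    rw [LinearMap.range_eq_top.2 (Algebra.trace_surjective K L), finrank_top, finrank_self] at hrank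
    rw [Module.natCard_eq_pow_finrank (K := K) (V := L), ← hrank, pow_add, pow_one, mul_comm,
      ← Module.natCard_eq_pow_finrank]
    rfl
  have hsum := Nat.card_sum (α := {x : L // Algebra.trace K L x = 0})
    (β := {x : L // Algebra.trace K L x ≠ 0})
  rw [Nat.card_congr (Equiv.sumCompl _)] at hsum
  calc _ = (Nat.card {x : L // Algebra.trace K L x = 0} +
        Nat.card {x : L // Algebra.trace K L x ≠ 0}) * Nat.card K -
          Nat.card {x : L // Algebra.trace K L x = 0} * Nat.card K := by
        rw [add_mul, Nat.add_sub_cancel_left]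
    _ = Nat.card L * (Nat.card K - 1) := by rw [← hsum, hker, Nat.mul_sub_one]

end Trace

namespace ArithmeticFunction

open scoped ArithmeticFunction.Moebius ArithmeticFunction.zeta

def notDvdIndicator (p : ℕ) : ArithmeticFunction ℤ := ⟨fun n => if p ∣ n then 0 else 1, by simp⟩

variable {p : ℕ}

theorem notDvdIndicator_apply (n : ℕ) : notDvdIndicator p n = if p ∣ n then 0 else 1 := rfl

theorem notDvdIndicator_mul (hp : p.Prime) (a b : ℕ) :
    notDvdIndicator p (a * b) = notDvdIndicator p a * notDvdIndicator p b := by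
  simp only [notDvdIndicator_apply, hp.dvd_mul]
  split_ifs <;> simp_all

theorem moebius_pmul_notDvdIndicator_mul (hp : p.Prime) :
    (μ : ArithmeticFunction ℤ).pmul (notDvdIndicator p) * notDvdIndicator p = 1 := by
  ext n
  calc ((μ : ArithmeticFunction ℤ).pmul (notDvdIndicator p) * notDvdIndicator p) n =
         ∑ x ∈ n.divisorsAntidiagonal, (μ x.1 : ℤ) * notDvdIndicator p n := by
        rw [mul_apply]
        refine Finset.sum_congr rfl fun x hx => ?_
        rw [pmul_apply, mul_assoc, ← notDvdIndicator_mul hp, (Nat.mem_divisorsAntidiagonal.1 hx).1]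
    _ = (μ * ζ : ArithmeticFunction ℤ) n * notDvdIndicator p n := by
        rw [← Finset.sum_mul, coe_mul_zeta_apply, Nat.sum_divisorsAntidiagonal fun a _ => (μ a : ℤ)]
    _ = (1 : ArithmeticFunction ℤ) n := by
        rw [moebius_mul_coe_zeta, one_apply]
        split_ifs with h
        · simp [h, notDvdIndicator_apply, hp.one_lt.ne']
        · rw [zero_mul]

theorem sum_moebius_mul_of_sum_divisors_filter_not_dvd (hp : p.Prime) {f g : ℕ → ℤ}
    (h : ∀ n, 0 < n → ∑ k ∈ n.divisors with ¬ p ∣ n / k, f k = g n) {n : ℕ} (hn : 0 < n) :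
    ∑ k ∈ n.divisors with ¬ p ∣ k, μ k * g (n / k) = f n := by
  let F : ArithmeticFunction ℤ := ⟨fun n => if n = 0 then 0 else f n, if_pos rfl⟩
  let G : ArithmeticFunction ℤ := ⟨fun n => if n = 0 then 0 else g n, if_pos rfl⟩
  have hFG : F * notDvdIndicator p = G := by
    ext m
    rcases Nat.eq_zero_or_pos m with rfl | hm
    · simp
    have hGm : G m = g m := if_neg hm.ne'
    rw [mul_apply, Nat.sum_divisorsAntidiagonal fun a b => F a * notDvdIndicator p b, hGm,
      ← h m hm, Finset.sum_filter]
    refine Finset.sum_congr rfl fun a ha => ?_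
    have hFa : F a = f a := if_neg (Nat.pos_of_mem_divisors ha).ne'
    rw [hFa, notDvdIndicator_apply]
    split_ifs <;> simp
  have hGF : G * (μ : ArithmeticFunction ℤ).pmul (notDvdIndicator p) = F := by
    rw [← hFG, mul_assoc, mul_comm (notDvdIndicator p), moebius_pmul_notDvdIndicator_mul hp,
      mul_one]
  have hFn : F n = f n := if_neg hn.ne'
  rw [← hFn, ← hGF, mul_apply, Nat.sum_divisorsAntidiagonal' fun a b =>
      G a * (μ : ArithmeticFunction ℤ).pmul (notDvdIndicator p) b, Finset.sum_filter]
  refine Finset.sum_congr rfl fun k hk => ?_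
  have hGk : G (n / k) = g (n / k) :=
    if_neg (Nat.div_pos (Nat.divisor_le hk) (Nat.pos_of_mem_divisors hk)).ne'
  rw [hGk, pmul_apply, notDvdIndicator_apply]
  split_ifs <;> ring

end ArithmeticFunction

noncomputable def numMonicIrreducibleCoeffNeZero (K : Type*) [Field K] (k : ℕ) : ℕ :=
  Nat.card {m : K[X] // m.Monic ∧ Irreducible m ∧ m.natDegree = k ∧ m.coeff (k - 1) ≠ 0}

theorem sum_divisors_filter_not_dvd_numMonicIrreducibleCoeffNeZero (K : Type*) [Field K]
    [Finite K] (p : ℕ) [Fact p.Prime] [CharP K p] {e : ℕ} (he : e ≠ 0) :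
    ∑ k ∈ e.divisors with ¬ p ∣ e / k, (Nat.card K * k * numMonicIrreducibleCoeffNeZero K k : ℤ) =
      (Nat.card K - 1) * Nat.card K ^ e := by
  have : NeZero e := ⟨he⟩
  let L := FiniteField.Extension K p e
  have hcount : Nat.card {x : L // Algebra.trace K L x ≠ 0} =
      ∑ k ∈ e.divisors with ¬ p ∣ e / k, k * numMonicIrreducibleCoeffNeZero K k := by
    rw [Nat.card_congr (Equiv.subtypeEquivRight (trace_ne_zero_iff_of_charP (K := K) (L := L) p)),
      natCard_minpoly_eq_sum_divisors
        (fun m => ¬ p ∣ finrank K L / m.natDegree ∧ m.coeff (m.natDegree - 1) ≠ 0),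
      FiniteField.finrank_extension, Finset.sum_filter]
    refine Finset.sum_congr rfl fun k _ => ?_
    split_ifs with hk
    · have : IsEmpty {m : K[X] // m.Monic ∧ Irreducible m ∧ m.natDegree = k ∧
          ¬ p ∣ e / m.natDegree ∧ m.coeff (m.natDegree - 1) ≠ 0} :=
        ⟨fun ⟨m, _, _, hm, h, _⟩ => h (hm ▸ hk)⟩
      rw [Nat.card_of_isEmpty, mul_zero]
    · refine congrArg (k * ·) (Nat.card_congr (Equiv.subtypeEquivRight fun (m : K[X]) => ?_))
      refine and_congr_right' (and_congr_right' (and_congr_right fun hm => ?_))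
      rw [hm]
      exact and_iff_right hk
  have hcard := natCard_trace_ne_zero_mul (K := K) (L := L)
  rw [hcount, FiniteField.natCard_extension] at hcard
  have hK : 1 ≤ Nat.card K := Nat.card_pos
  have hcardℤ := congrArg (Nat.cast : ℕ → ℤ) hcard
  push_cast [Nat.cast_sub hK] at hcardℤ
  simp_rw [mul_assoc, ← Finset.mul_sum]
  linear_combination hcardℤ

theorem stmt6 (p : ℕ) [Fact p.Prime] (d : ℕ) (hd : 1 ≤ d) :
    (p * d : ℤ) *
        Nat.card {m : Polynomial (ZMod p) //
          m.Monic ∧ Irreducible m ∧ m.natDegree = d ∧ m.coeff (d - 1) ≠ 0} =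
      (p - 1 : ℤ) *
        ∑ k ∈ d.divisors.filter (fun k => ¬ p ∣ k),
          (ArithmeticFunction.moebius k : ℤ) * (p : ℤ) ^ (d / k) := by
  have hsum (e : ℕ) (he : 0 < e) : ∑ k ∈ e.divisors with ¬ p ∣ e / k,
      (p * k * numMonicIrreducibleCoeffNeZero (ZMod p) k : ℤ) = (p - 1) * p ^ e := by
    simpa using sum_divisors_filter_not_dvd_numMonicIrreducibleCoeffNeZero (ZMod p) p he.ne'
  refine (ArithmeticFunction.sum_moebius_mul_of_sum_divisors_filter_not_dvd Fact.out hsum hd).symm.trans ?_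
  rw [Finset.mul_sum]
  exact Finset.sum_congr rfl fun _ _ => by ring
end

section
/- Let p be a prime and f ∈ (ZMod p)[X]. Then f is additive, i.e. aeval (X₀ + X₁) f = aeval X₀ f + aeval X₁ f in MvPolynomial (Fin 2) (ZMod p) where X₀, X₁ are the two variables, if and only if f lies in the (ZMod p)-linear span of {X^{p^i} : i ∈ ℕ}. -/
/-!
Substituting `X₀ ↦ Y T`, `X₁ ↦ T` into `f(X₀ + X₁) = f(X₀) + f(X₁)` and comparing coefficients
of `Tⁿ` gives `fₙ (Y + 1)ⁿ = fₙ Yⁿ + fₙ` for every `n`. Thus `f₀ = 0` and `fₙ` kills all binomial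
coefficients `n.choose k`, `0 < k < n`; in characteristic `p` these all vanish only when `n` is a
power of `p` (Lucas). Conversely `X ^ p ^ i` is additive by the Frobenius, and additivity is a
linear condition.
-/

open Polynomial

namespace Polynomial

section CommRing

variable (R : Type*) [CommRing R]

noncomputable def additivePolynomials : Submodule R R[X] :=
  LinearMap.ker
    ((aeval (MvPolynomial.X 0 + MvPolynomial.X 1 : MvPolynomial (Fin 2) R)).toLinearMap -
      (aeval (MvPolynomial.X 0)).toLinearMap - (aeval (MvPolynomial.X 1)).toLinearMap)

variable {R}

theorem mem_additivePolynomials {f : R[X]} :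
    f ∈ additivePolynomials R ↔
      aeval (MvPolynomial.X 0 + MvPolynomial.X 1 : MvPolynomial (Fin 2) R) f =
        aeval (MvPolynomial.X 0) f + aeval (MvPolynomial.X 1) f := by
  simp [additivePolynomials, sub_sub, sub_eq_zero]

theorem mem_span_of_X_pow_mem {f : R[X]} {s : Set R[X]} (h : ∀ n ∈ f.support, X ^ n ∈ s) :
    f ∈ Submodule.span R s := by
  rw [f.as_sum_support_C_mul_X_pow]
  refine Submodule.sum_mem _ fun n hn => ?_
  rw [← smul_eq_C_mul]
  exact Submodule.smul_mem _ _ (Submodule.subset_span (h n hn))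

theorem coeff_aeval_C_mul_X (f : R[X]) (c : R[X]) (n : ℕ) :
    (aeval (C c * X) f).coeff n = C (f.coeff n) * c ^ n := by
  rw [← aeval_map_algebraMap R[X], ← comp_eq_aeval, comp_C_mul_X_coeff, coeff_map]
  rfl

theorem C_coeff_mul_X_add_one_pow_of_mem_additivePolynomials {f : R[X]}
    (hf : f ∈ additivePolynomials R) (n : ℕ) :
    C (f.coeff n) * (X + 1) ^ n = C (f.coeff n) * X ^ n + C (f.coeff n) := by
  let φ : MvPolynomial (Fin 2) R →ₐ[R] R[X][X] := MvPolynomial.aeval ![C X * X, X]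
  have h := congrArg φ (mem_additivePolynomials.mp hf)
  simp only [map_add, ← aeval_algHom_apply] at h
  have h0 : φ (MvPolynomial.X 0) = C X * X := by simp [φ]
  have h1 : φ (MvPolynomial.X 1) = C 1 * X := by simp [φ]
  rw [h0, h1, ← add_mul, ← C_add] at h
  simpa only [coeff_add, coeff_aeval_C_mul_X, one_pow, mul_one] using congrArg (coeff · n) h

theorem coeff_zero_eq_zero_of_mem_additivePolynomials {f : R[X]}
    (hf : f ∈ additivePolynomials R) : f.coeff 0 = 0 := by
  have h := C_coeff_mul_X_add_one_pow_of_mem_additivePolynomials hf 0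
  rw [pow_zero, pow_zero, left_eq_add, C_eq_zero] at h
  exact h

theorem coeff_mul_choose_eq_zero_of_mem_additivePolynomials {f : R[X]}
    (hf : f ∈ additivePolynomials R) {n k : ℕ} (hk : 0 < k) (hkn : k < n) :
    f.coeff n * n.choose k = 0 := by
  have h := congrArg (coeff · k) (C_coeff_mul_X_add_one_pow_of_mem_additivePolynomials hf n)
  simpa only [coeff_C_mul, coeff_X_add_one_pow, coeff_add, coeff_X_pow, coeff_C, if_neg hkn.ne,
    if_neg hk.ne', mul_zero, add_zero] using h

end CommRing

section CharP

variable {R : Type*} [CommRing R] (p : ℕ) [Fact p.Prime] [CharP R p]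

theorem X_pow_char_pow_mem_additivePolynomials (i : ℕ) :
    (X ^ p ^ i : R[X]) ∈ additivePolynomials R := by
  rw [mem_additivePolynomials]
  simp only [map_pow, aeval_X]
  exact add_pow_char_pow ..

variable [IsDomain R]

theorem exists_eq_pow_of_mem_additivePolynomials {f : R[X]} (hf : f ∈ additivePolynomials R)
    {n : ℕ} (hn : f.coeff n ≠ 0) : ∃ i, n = p ^ i := by
  have hn0 : 0 < n := Nat.pos_of_ne_zero fun h =>
    hn (h ▸ coeff_zero_eq_zero_of_mem_additivePolynomials hf)
  refine ⟨_, Choose.eq_pow_multiplicity_of_choose_modEq_zero_nat hn0 fun k hk => ?_⟩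
  rw [Finset.mem_Icc] at hk
  have h := coeff_mul_choose_eq_zero_of_mem_additivePolynomials hf (n := n) hk.1 (by omega)
  rw [Nat.modEq_zero_iff_dvd, ← CharP.cast_eq_zero_iff R p]
  exact (mul_eq_zero.mp h).resolve_left hn

theorem additivePolynomials_eq_span_X_pow_char_pow :
    additivePolynomials R = Submodule.span R {g : R[X] | ∃ i : ℕ, g = X ^ p ^ i} := by
  refine le_antisymm (fun f hf => mem_span_of_X_pow_mem fun n hn => ?_) ?_
  · obtain ⟨i, rfl⟩ := exists_eq_pow_of_mem_additivePolynomials p hf (mem_support_iff.mp hn)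
    exact ⟨i, rfl⟩
  · rw [Submodule.span_le]
    rintro _ ⟨i, rfl⟩
    exact X_pow_char_pow_mem_additivePolynomials p i

end CharP

end Polynomial

theorem stmt8 (p : ℕ) [Fact p.Prime] (f : Polynomial (ZMod p)) :
    Polynomial.aeval
        (MvPolynomial.X 0 + MvPolynomial.X 1 : MvPolynomial (Fin 2) (ZMod p)) f =
      Polynomial.aeval (MvPolynomial.X 0 : MvPolynomial (Fin 2) (ZMod p)) f +
        Polynomial.aeval (MvPolynomial.X 1 : MvPolynomial (Fin 2) (ZMod p)) f ↔
    f ∈ Submodule.span (ZMod p)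
        {g : Polynomial (ZMod p) | ∃ i : ℕ, g = X ^ p ^ i} := by
  rw [← mem_additivePolynomials, additivePolynomials_eq_span_X_pow_char_pow p]
end

section
/- Let p be a prime, d ≥ 1, and R = (ZMod p)[X]/(X^{p^d} − X). The set B = {a ∈ R : a^p = a} of Frobenius-fixed elements is a (ZMod p)-subalgebra of R, and its dimension satisfies d · finrank (ZMod p) B = Σ_{k ∣ d} φ(k) · p^{d/k}, the sum over positive divisors k of d with φ the Euler totient function. Moreover, finrank (ZMod p) B equals the number of monic irreducible polynomials in (ZMod p)[X] whose degree divides d. -/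
/-!
Since `X ^ p ^ d - X` is squarefree, the Chinese remainder theorem splits `R` into the product of
the fields `𝔽_p[X] ⧸ (g)`, one for each monic irreducible `g` of degree dividing `d`. In each of
these fields the Frobenius-fixed elements are exactly the roots of `X ^ p - X`, that is `𝔽_p`, so
`B` has `p ^ N` elements, `N` being the number of such `g`; hence `dim B = N`.

Comparing degrees in `X ^ p ^ n - X = ∏ g` gives Gauss's formula `∑_{deg g ∣ n} deg g = p ^ n`.
Summing it against `φ` over `n = d / k` and regrouping by `g`, the inner sum becomes
`∑_{k ∣ d / deg g} φ k = d / deg g`, so the right-hand side is `∑_g deg g · (d / deg g) = d N`.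
-/

open Polynomial UniqueFactorizationMonoid
open scoped Nat

theorem Nat.div_ne_zero_of_dvd {m n : ℕ} (hn : n ≠ 0) (h : m ∣ n) : n / m ≠ 0 :=
  (Nat.div_ne_zero_iff_of_dvd h).2 ⟨hn, ne_zero_of_dvd_ne_zero hn h⟩

theorem Nat.dvd_and_dvd_div_comm {a b n : ℕ} : a ∣ n ∧ b ∣ n / a ↔ b ∣ n ∧ a ∣ n / b := by
  have key : ∀ {a b : ℕ}, a ∣ n ∧ b ∣ n / a ↔ a * b ∣ n := fun {a b} =>
    ⟨fun ⟨ha, hb⟩ => (Nat.dvd_div_iff_mul_dvd ha).1 hb,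
      fun h => ⟨dvd_of_mul_right_dvd h, (Nat.dvd_div_iff_mul_dvd (dvd_of_mul_right_dvd h)).2 h⟩⟩
  rw [key, key, mul_comm]

theorem Nat.sum_divisors_totient_mul_sum {α : Type*} (P : α → Prop) (w : α → ℕ)
    (S : ℕ → Finset α) (hS : ∀ n ≠ 0, ∀ a, a ∈ S n ↔ P a ∧ w a ∣ n) {d : ℕ} (hd : d ≠ 0) :
    ∑ k ∈ d.divisors, φ k * ∑ a ∈ S (d / k), w a = d * (S d).card := by
  have hswap (k : ℕ) (a : α) :
      k ∈ d.divisors ∧ a ∈ S (d / k) ↔ k ∈ (d / w a).divisors ∧ a ∈ S d := by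
    simp only [Nat.mem_divisors]
    constructor
    · rintro ⟨⟨hk, -⟩, ha⟩
      obtain ⟨hP, hw⟩ := (hS _ (Nat.div_ne_zero_of_dvd hd hk) a).1 ha
      obtain ⟨hw', hk'⟩ := Nat.dvd_and_dvd_div_comm.1 ⟨hk, hw⟩
      exact ⟨⟨hk', Nat.div_ne_zero_of_dvd hd hw'⟩, (hS d hd a).2 ⟨hP, hw'⟩⟩
    · rintro ⟨⟨hk, -⟩, ha⟩
      obtain ⟨hP, hw⟩ := (hS d hd a).1 ha
      obtain ⟨hk', hw'⟩ := Nat.dvd_and_dvd_div_comm.1 ⟨hw, hk⟩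
      exact ⟨⟨hk', hd⟩, (hS _ (Nat.div_ne_zero_of_dvd hd hk') a).2 ⟨hP, hw'⟩⟩
  calc ∑ k ∈ d.divisors, φ k * ∑ a ∈ S (d / k), w a
      = ∑ a ∈ S d, ∑ k ∈ (d / w a).divisors, φ k * w a := by
        simp_rw [Finset.mul_sum]
        exact Finset.sum_comm' hswap
    _ = ∑ a ∈ S d, d := by
        refine Finset.sum_congr rfl fun a ha => ?_
        rw [← Finset.sum_mul, Nat.sum_totient, Nat.div_mul_cancel ((hS d hd a).1 ha).2]
    _ = d * (S d).card := by rw [Finset.sum_const, smul_eq_mul, mul_comm]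

namespace Polynomial

variable {K : Type*} [Field K]

open Classical in
noncomputable def monicIrreducibleFactors (f : K[X]) : Finset K[X] :=
  (normalizedFactors f).toFinset

theorem mem_monicIrreducibleFactors {f g : K[X]} (hf : f ≠ 0) :
    g ∈ monicIrreducibleFactors f ↔ g.Monic ∧ Irreducible g ∧ g ∣ f := by
  classical
  rw [monicIrreducibleFactors, Multiset.mem_toFinset, Polynomial.mem_normalizedFactors_iff hf]
  tauto

theorem associated_prod_monicIrreducibleFactors {f : K[X]} (hf : Squarefree f) :
    Associated (∏ g ∈ monicIrreducibleFactors f, g) f := by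
  classical
  have hnodup : (normalizedFactors f).Nodup :=
    (squarefree_iff_nodup_normalizedFactors hf.ne_zero).1 hf
  rw [monicIrreducibleFactors, Finset.prod_eq_multiset_prod, Multiset.toFinset_val, hnodup.dedup,
    Multiset.map_id']
  exact prod_normalizedFactors hf.ne_zero

theorem sum_natDegree_monicIrreducibleFactors {f : K[X]} (hf : Squarefree f) :
    ∑ g ∈ monicIrreducibleFactors f, g.natDegree = f.natDegree := by
  rw [← natDegree_prod _ _ fun g hg => ((mem_monicIrreducibleFactors hf.ne_zero).1 hg).1.ne_zero]
  exact natDegree_eq_of_degree_eq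
    (degree_eq_degree_of_associated (associated_prod_monicIrreducibleFactors hf))

theorem isCoprime_of_mem_monicIrreducibleFactors {f g h : K[X]} (hf : f ≠ 0)
    (hg : g ∈ monicIrreducibleFactors f) (hh : h ∈ monicIrreducibleFactors f) (hgh : g ≠ h) :
    IsCoprime g h := by
  obtain ⟨hgm, hgi, -⟩ := (mem_monicIrreducibleFactors hf).1 hg
  obtain ⟨hhm, hhi, -⟩ := (mem_monicIrreducibleFactors hf).1 hh
  exact hgi.coprime_iff_not_dvd.2 fun hdvd =>
    hgh (eq_of_monic_of_associated hgm hhm (hgi.associated_of_dvd hhi hdvd))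

theorem span_singleton_eq_iInf_monicIrreducibleFactors {f : K[X]} (hf : Squarefree f) :
    Ideal.span {f} = ⨅ g : monicIrreducibleFactors f, Ideal.span {(g : K[X])} := by
  rw [Ideal.iInf_span_singleton fun g h hgh => isCoprime_of_mem_monicIrreducibleFactors
      hf.ne_zero g.2 h.2 (Subtype.coe_injective.ne hgh),
    Finset.prod_coe_sort (monicIrreducibleFactors f) fun g => g]
  exact (Ideal.span_singleton_eq_span_singleton.2 (associated_prod_monicIrreducibleFactors hf)).symm

end Polynomial

namespace FiniteField

variable {k : Type*} [Field k] [Fintype k]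

local notation "q" => Fintype.card k

theorem setOf_pow_card_eq_self (L : Type*) [Field L] [Algebra k L] :
    {x : L | x ^ q = x} = Set.range (algebraMap k L) := by
  have hroots : {x : L | x ^ q = x} = (X ^ q - X : k[X]).rootSet L := by
    ext x
    simp [mem_rootSet, X_pow_card_sub_X_ne_zero k Fintype.one_lt_card, sub_eq_zero]
  refine (Set.eq_of_subset_of_ncard_le ?_ ?_ (hroots ▸ rootSet_finite _ L)).symm
  · rintro _ ⟨c, rfl⟩
    simp [← map_pow, pow_card]
  · calc {x : L | x ^ q = x}.ncard = ((X ^ q - X : k[X]).rootSet L).ncard := by rw [hroots]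
      _ ≤ (X ^ q - X : k[X]).natDegree := ncard_rootSet_le _ L
      _ = q := X_pow_card_sub_X_natDegree_eq k Fintype.one_lt_card
      _ = (Set.range (algebraMap k L)).ncard := by
          rw [Set.ncard_range_of_injective (algebraMap k L).injective, Nat.card_eq_fintype_card]

variable (k) in
def frobeniusFixedSubalgebra (R : Type*) [CommRing R] [Algebra k R] : Subalgebra k R :=
  AlgHom.equalizer (frobeniusAlgHom k R) (AlgHom.id k R)

theorem mem_frobeniusFixedSubalgebra {R : Type*} [CommRing R] [Algebra k R] {a : R} :
    a ∈ frobeniusFixedSubalgebra k R ↔ a ^ q = a :=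
  Iff.rfl

theorem separable_X_pow_card_pow_sub_X {n : ℕ} (hn : n ≠ 0) :
    (X ^ q ^ n - X : k[X]).Separable :=
  galois_poly_separable (ringChar k) (q ^ n)
    (dvd_pow (ringChar.dvd (cast_card_eq_zero k)) hn)

theorem mem_monicIrreducibleFactors_X_pow_card_pow_sub_X {n : ℕ} (hn : n ≠ 0) {g : k[X]} :
    g ∈ monicIrreducibleFactors (X ^ q ^ n - X : k[X]) ↔
      g.Monic ∧ Irreducible g ∧ g.natDegree ∣ n := by
  rw [mem_monicIrreducibleFactors (X_pow_card_pow_sub_X_ne_zero k hn Fintype.one_lt_card)]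
  refine and_congr_right fun _ => and_congr_right fun hg => ?_
  rw [hg.natDegree_dvd_iff_dvd_X_pow_card_pow_sub_X, Nat.card_eq_fintype_card]

theorem sum_natDegree_monicIrreducibleFactors_X_pow_card_pow_sub_X {n : ℕ} (hn : n ≠ 0) :
    ∑ g ∈ monicIrreducibleFactors (X ^ q ^ n - X : k[X]), g.natDegree = q ^ n := by
  rw [sum_natDegree_monicIrreducibleFactors (separable_X_pow_card_pow_sub_X hn).squarefree,
    X_pow_card_pow_sub_X_natDegree_eq k hn Fintype.one_lt_card]

theorem mul_card_monicIrreducibleFactors_X_pow_card_pow_sub_X {n : ℕ} (hn : n ≠ 0) :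
    n * (monicIrreducibleFactors (X ^ q ^ n - X : k[X])).card =
      ∑ m ∈ n.divisors, φ m * q ^ (n / m) := by
  rw [← Nat.sum_divisors_totient_mul_sum (fun g : k[X] ↦ g.Monic ∧ Irreducible g) natDegree
    (fun m ↦ monicIrreducibleFactors (X ^ q ^ m - X : k[X]))
    (fun m hm g ↦ (mem_monicIrreducibleFactors_X_pow_card_pow_sub_X hm).trans and_assoc.symm) hn]
  refine Finset.sum_congr rfl fun m hm ↦ ?_
  rw [sum_natDegree_monicIrreducibleFactors_X_pow_card_pow_sub_X
    (Nat.div_ne_zero_of_dvd hn (Nat.dvd_of_mem_divisors hm))]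

theorem natCard_frobeniusFixedSubalgebra_quotient_span {f : k[X]} (hf : Squarefree f) :
    Nat.card (frobeniusFixedSubalgebra k (k[X] ⧸ Ideal.span {f})) =
      q ^ (monicIrreducibleFactors f).card := by
  have hcoprime : Pairwise (Function.onFun IsCoprime
      fun g : monicIrreducibleFactors f ↦ Ideal.span {g.1}) := fun g h hgh ↦
    (Ideal.isCoprime_span_singleton_iff _ _).2 <| isCoprime_of_mem_monicIrreducibleFactors
      hf.ne_zero g.2 h.2 (Subtype.coe_injective.ne hgh)
  let e : k[X] ⧸ Ideal.span {f} ≃+* Π g : monicIrreducibleFactors f, AdjoinRoot g.1 :=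
    (Ideal.quotEquivOfEq (span_singleton_eq_iInf_monicIrreducibleFactors hf)).trans
      (Ideal.quotientInfRingEquivPiQuotient _ hcoprime)
  have hfield (g : monicIrreducibleFactors f) :
      Nat.card {x : AdjoinRoot g.1 // x ^ q = x} = q := by
    have : Fact (Irreducible g.1) := ⟨((mem_monicIrreducibleFactors hf.ne_zero).1 g.2).2.1⟩
    change Nat.card ({x | x ^ q = x} : Set (AdjoinRoot g.1)) = q
    rw [setOf_pow_card_eq_self, Nat.card_range_of_injective (algebraMap k _).injective,
      Nat.card_eq_fintype_card]
  calc Nat.card (frobeniusFixedSubalgebra k (k[X] ⧸ Ideal.span {f}))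
      = Nat.card {b : Π g : monicIrreducibleFactors f, AdjoinRoot g.1 // b ^ q = b} :=
        Nat.card_congr <| e.toEquiv.subtypeEquiv fun a ↦ by
          simp [mem_frobeniusFixedSubalgebra, ← map_pow, e.injective.eq_iff]
    _ = Nat.card (Π g : monicIrreducibleFactors f, {x : AdjoinRoot g.1 // x ^ q = x}) :=
        Nat.card_congr <| (Equiv.subtypeEquivRight fun b ↦
          (funext_iff : b ^ q = b ↔ ∀ g, b g ^ q = b g)).trans
          (Equiv.subtypePiEquivPi (p := fun _ x ↦ x ^ q = x))
    _ = q ^ (monicIrreducibleFactors f).card := by simp [Nat.card_pi, hfield]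

theorem finrank_frobeniusFixedSubalgebra_quotient_span {f : k[X]} (hf : Squarefree f) :
    Module.finrank k (frobeniusFixedSubalgebra k (k[X] ⧸ Ideal.span {f})) =
      (monicIrreducibleFactors f).card := by
  have : Module.Finite k (k[X] ⧸ Ideal.span {f}) := (AdjoinRoot.powerBasis hf.ne_zero).finite
  have hcard := Module.natCard_eq_pow_finrank (K := k)
    (V := frobeniusFixedSubalgebra k (k[X] ⧸ Ideal.span {f}))
  rw [Nat.card_eq_fintype_card (α := k), natCard_frobeniusFixedSubalgebra_quotient_span hf] at hcard
  exact Nat.pow_right_injective (Fintype.one_lt_card (α := k)) hcard.symm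

end FiniteField

open FiniteField

theorem stmt9 (p : ℕ) [Fact p.Prime] (d : ℕ) (hd : 1 ≤ d) :
    ∃ B : Subalgebra (ZMod p)
        (Polynomial (ZMod p) ⧸ Ideal.span {(X : Polynomial (ZMod p)) ^ p ^ d - X}),
      (B : Set (Polynomial (ZMod p) ⧸
          Ideal.span {(X : Polynomial (ZMod p)) ^ p ^ d - X})) = {a | a ^ p = a} ∧
      d * Module.finrank (ZMod p) B =
        ∑ k ∈ d.divisors, Nat.totient k * p ^ (d / k) ∧
      Module.finrank (ZMod p) B =
        Nat.card {m : Polynomial (ZMod p) //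
          m.Monic ∧ Irreducible m ∧ m.natDegree ∣ d} := by
  have hd0 : d ≠ 0 := Nat.one_le_iff_ne_zero.mp hd
  have hq : Fintype.card (ZMod p) = p := ZMod.card p
  have hf : Squarefree ((X : (ZMod p)[X]) ^ p ^ d - X) := by
    simpa only [hq] using (separable_X_pow_card_pow_sub_X (k := ZMod p) hd0).squarefree
  refine ⟨frobeniusFixedSubalgebra (ZMod p) _, ?_, ?_, ?_⟩
  · ext a
    rw [SetLike.mem_coe, mem_frobeniusFixedSubalgebra, hq]
    rfl
  · rw [finrank_frobeniusFixedSubalgebra_quotient_span hf]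
    simpa only [hq] using mul_card_monicIrreducibleFactors_X_pow_card_pow_sub_X (k := ZMod p) hd0
  · rw [finrank_frobeniusFixedSubalgebra_quotient_span hf, ← Nat.card_eq_finsetCard]
    exact Nat.card_congr <| Equiv.subtypeEquivRight fun g ↦ by
      simpa only [hq] using mem_monicIrreducibleFactors_X_pow_card_pow_sub_X (k := ZMod p) hd0
end

section
/- Let p be a prime, d ≥ 1, and R = (ZMod p)[X]/(X^{p^d} − X). Let ψ : R → R be the (ZMod p)-algebra automorphism induced by X ↦ X + 1. Then the fixed subalgebra C = {a ∈ R : ψ a = a} equals Algebra.adjoin (ZMod p) {g₁} where g₁ is the image of X^p − X in R, and finrank (ZMod p) C = p^{d−1}. -/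
/-!
The shift `f ↦ f(X + 1)` is `Polynomial.taylor 1`. In characteristic `p` it fixes
`φ = X ^ p - X` and `F = X ^ p ^ d - X`, so division by either of them commutes with the shift.
Hence a fixed polynomial `f = φ q + r` has fixed quotient `q` and fixed remainder `r`; a fixed
polynomial of degree `< p` takes the same value on all of `𝔽_p`, so `r` is constant, and
induction on the degree puts `f` in `𝔽_p[φ]`. In `R` the same applies to the remainder mod `F`
of any representative.

For the dimension, `h = ∑_{i<d} X ^ p ^ i` satisfies `h ∘ φ = F` by telescoping
`φ ^ p ^ i = X ^ p ^ (i + 1) - X ^ p ^ i`. So `h` kills the image of `φ`, and any monic `q`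
killing it has `F ∣ q ∘ φ`, whence `p * deg h ≤ p * deg q`: `h` is the minimal polynomial,
of degree `p ^ (d - 1)`.
-/

open Polynomial

namespace Polynomial

section Ring

variable {R : Type*} [Ring R]

theorem monic_X_pow_sub_X {n : ℕ} (hn : 1 < n) : ((X : R[X]) ^ n - X).Monic :=
  monic_X_pow_sub (degree_X_le.trans_lt (by exact_mod_cast hn))

theorem natDegree_X_pow_sub_X [Nontrivial R] {n : ℕ} (hn : 1 < n) :
    ((X : R[X]) ^ n - X).natDegree = n := by
  rw [natDegree_sub_eq_left_of_natDegree_lt] <;> simp [hn]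

end Ring

theorem Monic.of_comp {R : Type*} [CommRing R] [NoZeroDivisors R] {f φ : R[X]} (hφ : φ.Monic)
    (hφ0 : φ.natDegree ≠ 0) (hf : (f.comp φ).Monic) : f.Monic := by
  rwa [Monic, leadingCoeff_comp hφ0, hφ.leadingCoeff, one_pow, mul_one] at hf

section CommRing

variable {R : Type*} [CommRing R]

theorem divByMonic_modByMonic_taylor_of_taylor_eq {g : R[X]} {r : R} (hg : g.Monic)
    (hgr : taylor r g = g) (f : R[X]) :
    taylor r f /ₘ g = taylor r (f /ₘ g) ∧ taylor r f %ₘ g = taylor r (f %ₘ g) := by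
  nontriviality R
  refine div_modByMonic_unique _ _ hg ⟨?_, ?_⟩
  · conv_rhs => rw [← modByMonic_add_div f g, map_add, taylor_mul, hgr]
  · rw [degree_taylor]
    exact degree_modByMonic_lt f hg

variable (p : ℕ) [ExpChar R p]

theorem taylor_one_X_pow_expChar_pow_sub_X (n : ℕ) :
    taylor (1 : R) (X ^ p ^ n - X) = X ^ p ^ n - X := by
  rw [map_sub, taylor_X_pow, taylor_X, map_one, add_pow_expChar_pow, one_pow]
  ring

theorem taylor_one_X_pow_sub_X : taylor (1 : R) (X ^ p - X) = X ^ p - X := by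
  simpa using taylor_one_X_pow_expChar_pow_sub_X (R := R) p 1

theorem sum_X_pow_expChar_pow_comp (n : ℕ) :
    (∑ i ∈ Finset.range n, (X : R[X]) ^ p ^ i).comp (X ^ p - X) = X ^ p ^ n - X := by
  have hstep : ∀ i, ((X : R[X]) ^ p - X) ^ p ^ i = X ^ p ^ (i + 1) - X ^ p ^ i := fun i => by
    rw [sub_pow_expChar_pow, ← pow_mul, pow_succ']
  simp only [sum_comp, X_pow_comp, hstep]
  rw [Finset.sum_range_sub (fun i => (X : R[X]) ^ p ^ i), pow_zero, pow_one]

end CommRing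

section IsDomain

variable {R : Type*} [CommRing R] [IsDomain R] (p : ℕ) [Fact p.Prime] [CharP R p]

theorem eq_C_of_taylor_one_eq_self {r : R[X]} (hr : taylor 1 r = r) (hdeg : r.natDegree < p) :
    r = C (r.eval 0) := by
  have heval : ∀ n : ℕ, r.eval (n : R) = r.eval 0 := by
    intro n
    induction n with
    | zero => simp
    | succ n ih => rw [Nat.cast_succ, ← taylor_eval, hr, ih]
  rw [← sub_eq_zero]
  refine eq_zero_of_natDegree_lt_card_of_eval_eq_zero _ (ZMod.castHom_injective (n := p) R)
    (fun a => ?_) (by rwa [ZMod.card, natDegree_sub_C])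
  obtain ⟨n, rfl⟩ := ZMod.natCast_zmod_surjective a
  simp [heval]

theorem mem_adjoin_X_pow_sub_X_of_taylor_one_eq_self {f : R[X]} (hf : taylor 1 f = f) :
    f ∈ Algebra.adjoin R {(X : R[X]) ^ p - X} := by
  have hp : 1 < p := (Fact.out : p.Prime).one_lt
  have hφ : ((X : R[X]) ^ p - X).Monic := monic_X_pow_sub_X hp
  have hφdeg : ((X : R[X]) ^ p - X).natDegree = p := natDegree_X_pow_sub_X hp
  induction hn : f.natDegree using Nat.strong_induction_on generalizing f with
  | _ n ih =>
    rcases lt_or_ge n p with hlt | hge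
    · rw [eq_C_of_taylor_one_eq_self p hf (hn ▸ hlt)]
      exact (Algebra.adjoin R _).algebraMap_mem _
    obtain ⟨hq, hr⟩ := divByMonic_modByMonic_taylor_of_taylor_eq hφ (taylor_one_X_pow_sub_X p) f
    rw [hf] at hq hr
    have hrdeg : (f %ₘ (X ^ p - X)).natDegree < p :=
      (natDegree_modByMonic_lt f hφ fun h1 => by simp [h1] at hφdeg; omega).trans_eq hφdeg
    rw [← modByMonic_add_div f (X ^ p - X), eq_C_of_taylor_one_eq_self p hr.symm hrdeg]
    refine add_mem ((Algebra.adjoin R _).algebraMap_mem _)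
      (mul_mem (Algebra.subset_adjoin rfl) (ih _ ?_ hq.symm rfl))
    rw [natDegree_divByMonic f hφ, hφdeg]
    omega

theorem quotient_mk_mem_adjoin_of_mk_taylor_one_eq {F : R[X]} (hF : F.Monic)
    (hFt : taylor 1 F = F) {f : R[X]}
    (hf : Ideal.Quotient.mk (Ideal.span {F}) (taylor 1 f) = Ideal.Quotient.mk (Ideal.span {F}) f) :
    Ideal.Quotient.mk (Ideal.span {F}) f ∈
      Algebra.adjoin R {Ideal.Quotient.mk (Ideal.span {F}) (X ^ p - X)} := by
  have hmod : taylor 1 (f %ₘ F) = f %ₘ F := by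
    rw [← (divByMonic_modByMonic_taylor_of_taylor_eq hF hFt f).2]
    exact modByMonic_eq_of_dvd_sub hF (Ideal.mem_span_singleton.1 (Ideal.Quotient.eq.1 hf))
  have hmk : Ideal.Quotient.mk (Ideal.span {F}) f = Ideal.Quotient.mk _ (f %ₘ F) :=
    Ideal.Quotient.eq.2 <|
      Ideal.mem_span_singleton.2 ⟨f /ₘ F, by rw [modByMonic_eq_sub_mul_div]; ring⟩
  rw [hmk, ← Ideal.Quotient.mkₐ_eq_mk R, ← Set.image_singleton, ← AlgHom.map_adjoin]
  exact Subalgebra.mem_map.2 ⟨_, mem_adjoin_X_pow_sub_X_of_taylor_one_eq_self p hmod, rfl⟩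

end IsDomain

section Field

variable {K : Type*} [Field K]

theorem minpoly_quotient_mk_of_comp_eq {h φ F : K[X]} (hh : h.Monic) (hφ : φ.natDegree ≠ 0)
    (hF : h.comp φ = F) : minpoly K (Ideal.Quotient.mk (Ideal.span {F}) φ) = h := by
  subst hF
  have haeval : ∀ q : K[X], aeval (Ideal.Quotient.mk (Ideal.span {h.comp φ}) φ) q =
      Ideal.Quotient.mk _ (q.comp φ) := fun q => by
    rw [← Ideal.Quotient.mkₐ_eq_mk K, aeval_algHom_apply, ← comp_eq_aeval]
  refine (minpoly.unique _ _ hh ?_ fun q hq hqx => ?_).symm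
  · rw [haeval, Ideal.Quotient.eq_zero_iff_mem]
    exact Ideal.mem_span_singleton_self _
  rw [haeval, Ideal.Quotient.eq_zero_iff_mem, Ideal.mem_span_singleton] at hqx
  have hqφ : q.comp φ ≠ 0 := by
    rw [← leadingCoeff_ne_zero, leadingCoeff_comp hφ, hq.leadingCoeff, one_mul]
    exact pow_ne_zero _ (leadingCoeff_ne_zero.2 (ne_zero_of_natDegree_gt (Nat.pos_of_ne_zero hφ)))
  have hle := natDegree_le_of_dvd hqx hqφ
  rw [natDegree_comp, natDegree_comp] at hle
  rw [degree_eq_natDegree hh.ne_zero, degree_eq_natDegree hq.ne_zero]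
  exact_mod_cast Nat.le_of_mul_le_mul_right hle (Nat.pos_of_ne_zero hφ)

theorem finrank_adjoin_quotient_mk_of_comp_eq {h φ F : K[X]} (hh : h.Monic)
    (hφ : φ.natDegree ≠ 0) (hF : h.comp φ = F) :
    Module.finrank K (Algebra.adjoin K {Ideal.Quotient.mk (Ideal.span {F}) φ}) = h.natDegree := by
  have hmin := minpoly_quotient_mk_of_comp_eq hh hφ hF
  have hx : IsIntegral K (Ideal.Quotient.mk (Ideal.span {F}) φ) :=
    ⟨h, hh, by rw [← hmin]; exact minpoly.aeval K (Ideal.Quotient.mk (Ideal.span {F}) φ)⟩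
  rw [(Algebra.adjoin.powerBasis hx).finrank, Algebra.adjoin.powerBasis_dim, hmin]

end Field

end Polynomial

set_option maxHeartbeats 1000000 in
set_option synthInstance.maxHeartbeats 400000 in
theorem stmt11 (p : ℕ) [Fact p.Prime] (d : ℕ) (hd : 1 ≤ d)
    (ψ : (Polynomial (ZMod p) ⧸ Ideal.span {(X : Polynomial (ZMod p)) ^ p ^ d - X}) ≃ₐ[ZMod p]
         (Polynomial (ZMod p) ⧸ Ideal.span {(X : Polynomial (ZMod p)) ^ p ^ d - X}))
    (hψ : ∀ f : Polynomial (ZMod p),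
      ψ (Ideal.Quotient.mk (Ideal.span {(X : Polynomial (ZMod p)) ^ p ^ d - X}) f) =
        Ideal.Quotient.mk (Ideal.span {(X : Polynomial (ZMod p)) ^ p ^ d - X})
          (f.comp (X + 1))) :
    {a | ψ a = a} =
      (Algebra.adjoin (ZMod p)
        {Ideal.Quotient.mk (Ideal.span {(X : Polynomial (ZMod p)) ^ p ^ d - X})
          (X ^ p - X)} :
        Subalgebra (ZMod p)
          (Polynomial (ZMod p) ⧸ Ideal.span {(X : Polynomial (ZMod p)) ^ p ^ d - X})) ∧
    Module.finrank (ZMod p)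
      (Algebra.adjoin (ZMod p)
        {Ideal.Quotient.mk (Ideal.span {(X : Polynomial (ZMod p)) ^ p ^ d - X})
          (X ^ p - X)}) = p ^ (d - 1) := by
  obtain ⟨e, rfl⟩ : ∃ e, d = e + 1 := ⟨d - 1, by omega⟩
  have hp : 1 < p := (Fact.out : p.Prime).one_lt
  have hpd : 1 < p ^ (e + 1) := Nat.one_lt_pow (by omega) hp
  have hψ' : ∀ f, ψ (Ideal.Quotient.mk _ f) = Ideal.Quotient.mk _ (taylor 1 f) := fun f => by
    rw [hψ, taylor_apply, C_1]
  have hφ : ((X : (ZMod p)[X]) ^ p - X).natDegree ≠ 0 := by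
    rw [natDegree_X_pow_sub_X hp]; omega
  have hcomp := sum_X_pow_expChar_pow_comp (R := ZMod p) p (e + 1)
  have hh := (monic_X_pow_sub_X hp).of_comp hφ (hcomp ▸ monic_X_pow_sub_X hpd)
  refine ⟨Set.Subset.antisymm (fun a ha => ?_) ?_, ?_⟩
  · obtain ⟨f, rfl⟩ := Ideal.Quotient.mk_surjective a
    exact quotient_mk_mem_adjoin_of_mk_taylor_one_eq p (monic_X_pow_sub_X hpd)
      (taylor_one_X_pow_expChar_pow_sub_X p _) ((hψ' f).symm.trans ha)
  · have hgen : ψ (Ideal.Quotient.mk _ (X ^ p - X)) = Ideal.Quotient.mk _ (X ^ p - X) := by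
      rw [hψ', taylor_one_X_pow_sub_X]
    exact fun a ha => Algebra.adjoin_le (S := AlgHom.equalizer ψ.toAlgHom (AlgHom.id _ _))
      (Set.singleton_subset_iff.2 hgen) ha
  · rw [finrank_adjoin_quotient_mk_of_comp_eq hh hφ hcomp]
    have hdeg := congrArg natDegree hcomp
    rw [natDegree_comp, natDegree_X_pow_sub_X hp, natDegree_X_pow_sub_X hpd, pow_succ] at hdeg
    exact Nat.eq_of_mul_eq_mul_right (by omega) hdeg
end

section
/- Let p be an odd prime and for each i ∈ ZMod p define δ_i = −∏_{j ∈ ZMod p, j ≠ i} (X − C j) ∈ (ZMod p)[X]. Then Σ_{i ∈ ZMod p} δ_i = 1, and for every i ∈ ZMod p one has Σ_{j ∈ ZMod p} δ_j · δ_{j−i} = (if i = 0 then 1 else 0) in (ZMod p)[X]. -/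
open Polynomial

theorem stmt13 (p : ℕ) [Fact p.Prime] (hp : p ≠ 2)
    (δ : ZMod p → Polynomial (ZMod p))
    (hδ : ∀ i : ZMod p, δ i = -∏ j ∈ Finset.univ.erase i, (X - C j)) :
    (∑ i : ZMod p, δ i = 1) ∧
    ∀ i : ZMod p,
      ∑ j : ZMod p, δ j * δ (j - i) =
        if i = 0 then (1 : Polynomial (ZMod p)) else 0 := by
  have hp1 : 1 < p := (Fact.out : p.Prime).one_lt
  set F : Polynomial (ZMod p) := ∏ j : ZMod p, (X - C j) with hFdef
  -- F = X^p - X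
  have hcard : Fintype.card (ZMod p) = p := ZMod.card p
  have hFX : F = X ^ p - X := by
    have hroots : roots (X ^ p - X : (ZMod p)[X]) = Finset.univ.val := by
      have := FiniteField.roots_X_pow_card_sub_X (ZMod p)
      rwa [hcard] at this
    have hm : (X ^ p - X : (ZMod p)[X]).Monic := by
      have := FiniteField.X_pow_card_sub_X_natDegree_eq (ZMod p) hp1
      have h2 : (X : (ZMod p)[X]).degree < (X ^ p : (ZMod p)[X]).degree := by
        rw [degree_X_pow, degree_X]
        exact_mod_cast hp1
      simpa using (monic_X_pow p).sub_of_left h2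
    have hc : Multiset.card (roots (X ^ p - X : (ZMod p)[X]))
        = (X ^ p - X : (ZMod p)[X]).natDegree := by
      rw [hroots, FiniteField.X_pow_card_sub_X_natDegree_eq (ZMod p) hp1]
      simpa using hcard
    have := prod_multiset_X_sub_C_of_monic_of_roots_card_eq hm hc
    rw [hroots] at this
    rw [hFdef, ← this]
    rfl
  have hF' : derivative F = -1 := by
    rw [hFX]
    simp [derivative_X_pow, ZMod.natCast_self]
  -- (X - C j) * δ j = -F
  have hmul : ∀ j : ZMod p, (X - C j) * δ j = -F := by
    intro j
    rw [hδ j, mul_neg, hFdef, ← Finset.mul_prod_erase _ _ (Finset.mem_univ j)]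
  -- (X - C j) * derivative (δ j) = 1 - δ j
  have hd : ∀ j : ZMod p, (X - C j) * derivative (δ j) = 1 - δ j := by
    intro j
    have h := congrArg derivative (hmul j)
    rw [derivative_mul, derivative_neg, hF', derivative_sub, derivative_X, derivative_C,
      sub_zero, one_mul] at h
    linear_combination h
  have hXC : ∀ j : ZMod p, (X - C j : (ZMod p)[X]) ≠ 0 := fun j => X_sub_C_ne_zero j
  -- first part
  have hsum : ∑ i : ZMod p, δ i = 1 := by
    have hder : derivative F = ∑ j : ZMod p, ∏ k ∈ Finset.univ.erase j, (X - C k) := by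
      rw [hFdef, Finset.prod_eq_multiset_prod, derivative_prod]
      rw [Finset.sum_eq_multiset_sum]
      congr 1
      refine Multiset.map_congr rfl fun j _ => ?_
      rw [derivative_X_sub_C, mul_one, ← Finset.erase_val]
      rfl
    have : ∑ i : ZMod p, δ i = -derivative F := by
      rw [hder, ← Finset.sum_neg_distrib]
      exact Finset.sum_congr rfl fun i _ => by rw [hδ i]
    rw [this, hF', neg_neg]
  refine ⟨hsum, fun i => ?_⟩
  by_cases hi : i = 0
  · subst hi
    simp only [sub_zero, if_true]
    -- δ j ^ 2 = F * δ j' + δ j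
    have hsq : ∀ j : ZMod p, δ j * δ j = F * derivative (δ j) + δ j := by
      intro j
      have hne : ((X - C j) * (X - C j) : (ZMod p)[X]) ≠ 0 := mul_ne_zero (hXC j) (hXC j)
      apply mul_left_cancel₀ hne
      linear_combination ((X - C j) * δ j - (X - C j)) * hmul j - (X - C j) * F * hd j
    calc ∑ j : ZMod p, δ j * δ j = ∑ j : ZMod p, (F * derivative (δ j) + δ j) :=
          Finset.sum_congr rfl fun j _ => hsq j
      _ = F * derivative (∑ j : ZMod p, δ j) + ∑ j : ZMod p, δ j := by
          rw [derivative_sum, Finset.mul_sum, Finset.sum_add_distrib]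
      _ = 1 := by rw [hsum, derivative_one, mul_zero, zero_add]
  · simp only [hi, if_false]
    -- (C k - C j) * (δ j * δ k) = F * (δ j - δ k)
    have hB : ∀ j k : ZMod p, (C k - C j) * (δ j * δ k) = F * (δ j - δ k) := by
      intro j k
      have hne : ((X - C j) * (X - C k) : (ZMod p)[X]) ≠ 0 := mul_ne_zero (hXC j) (hXC k)
      apply mul_left_cancel₀ hne
      linear_combination ((C k - C j) * ((X - C k) * δ k) - F * (X - C k)) * hmul j
        + F * (X - C k) * hmul k
    have h1 : ∀ j : ZMod p, (-C i) * (δ j * δ (j - i)) = F * (δ j - δ (j - i)) := by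
      intro j
      have := hB j (j - i)
      rwa [show (C (j - i) - C j : (ZMod p)[X]) = -C i by rw [map_sub]; ring] at this
    have h2 : ∑ j : ZMod p, δ (j - i) = 1 := by
      rw [← hsum]
      exact Fintype.sum_equiv (Equiv.subRight i) _ _ fun j => rfl
    have h3 : (-C i : (ZMod p)[X]) * ∑ j : ZMod p, δ j * δ (j - i) = 0 := by
      rw [Finset.mul_sum]
      calc ∑ j : ZMod p, (-C i) * (δ j * δ (j - i))
          = ∑ j : ZMod p, F * (δ j - δ (j - i)) := Finset.sum_congr rfl fun j _ => h1 j
        _ = F * ((∑ j : ZMod p, δ j) - ∑ j : ZMod p, δ (j - i)) := by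
            rw [← Finset.sum_sub_distrib, ← Finset.mul_sum]
        _ = 0 := by rw [hsum, h2, sub_self, mul_zero]
    have hC : (-C i : (ZMod p)[X]) ≠ 0 := by
      simp only [ne_eq, neg_eq_zero, C_eq_zero]
      exact hi
    rcases mul_eq_zero.mp h3 with h | h
    · exact absurd h hC
    · exact h
end

section
/- Let p be an odd prime and for each i ∈ ZMod p define δ_i = −∏_{j ∈ ZMod p, j ≠ i} (X − C j) ∈ (ZMod p)[X], and g₁ = X^p − X. Then for all i, j ∈ ZMod p with i ≠ j one has C (i − j) · (δ_i · δ_j) + g₁ · (δ_i − δ_j) = 0, equivalently δ_i δ_j = −g₁ (δ_i − δ_j)/(i−j); and for every i ∈ ZMod p one has δ_i · δ_i = δ_i + g₁ · Σ_{k=1}^{p−1} C (k⁻¹) · δ_{i+k}, where the sum is over the nonzero elements k of ZMod p and k⁻¹ is the inverse in ZMod p. -/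
open Polynomial Finset

theorem stmt14 (p : ℕ) [Fact p.Prime] (hp : p ≠ 2)
    (δ : ZMod p → Polynomial (ZMod p))
    (hδ : ∀ i : ZMod p, δ i = -∏ j ∈ Finset.univ.erase i, (X - C j)) :
    (∀ i j : ZMod p, i ≠ j →
      C (i - j) * (δ i * δ j) +
        ((X : Polynomial (ZMod p)) ^ p - X) * (δ i - δ j) = 0) ∧
    ∀ i : ZMod p,
      δ i * δ i =
        δ i + ((X : Polynomial (ZMod p)) ^ p - X) *
          ∑ k ∈ Finset.univ.erase (0 : ZMod p), C k⁻¹ * δ (i + k) := by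
  have hpp : p.Prime := Fact.out
  have hp1 : 1 < p := hpp.one_lt
  -- the product of all (X - C j) is X^p - X
  have hmonic : (X ^ p - X : Polynomial (ZMod p)).Monic := by
    apply (monic_X_pow p).sub_of_left
    rw [degree_X_pow, degree_X]
    exact_mod_cast hp1
  have hroots : (X ^ p - X : Polynomial (ZMod p)).roots = Finset.univ.val := by
    have := FiniteField.roots_X_pow_card_sub_X (ZMod p)
    rwa [ZMod.card] at this
  have hdeg : (X ^ p - X : Polynomial (ZMod p)).natDegree = p :=
    FiniteField.X_pow_card_sub_X_natDegree_eq _ hp1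
  have hprod : (∏ j : ZMod p, (X - C j)) = (X : Polynomial (ZMod p)) ^ p - X := by
    have h := prod_multiset_X_sub_C_of_monic_of_roots_card_eq hmonic
      (by rw [hroots, hdeg]; simp [ZMod.card p])
    rw [hroots] at h
    rw [Finset.prod_eq_multiset_prod]
    exact h
  -- key identity
  have h1 : ∀ i : ZMod p, (X - C i) * δ i = -((X : Polynomial (ZMod p)) ^ p - X) := by
    intro i
    rw [hδ i, mul_neg]
    exact neg_inj.mpr ((Finset.mul_prod_erase _ _ (Finset.mem_univ i)).trans hprod)
  -- sum of all δ is 1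
  have hsum : ∑ i : ZMod p, δ i = 1 := by
    have hder : ∑ i : ZMod p, ∏ j ∈ Finset.univ.erase i, (X - C j)
        = (-1 : Polynomial (ZMod p)) := by
      have h2 : derivative (∏ j : ZMod p, (X - C j))
          = ∑ i : ZMod p, ∏ j ∈ Finset.univ.erase i, (X - C j) := by
        rw [Finset.prod_eq_multiset_prod, derivative_prod, Finset.sum_eq_multiset_sum]
        congr 1
        apply Multiset.map_congr rfl
        intro i _
        rw [derivative_sub, derivative_X, derivative_C, sub_zero, mul_one,
          Finset.prod_eq_multiset_prod, Finset.erase_val]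
      rw [← h2, hprod, derivative_sub, derivative_X_pow, derivative_X]
      simp [ZMod.natCast_self]
    simp only [hδ]
    rw [Finset.sum_neg_distrib, hder, neg_neg]
  -- sum of inverses of nonzero elements is 0
  have hzero : ∑ k : ZMod p, k = 0 := by
    have h : (∑ k : ZMod p, k) = ∑ k : ZMod p, -k :=
      Fintype.sum_equiv (Equiv.neg _) _ _ (fun k => (neg_neg k).symm)
    rw [Finset.sum_neg_distrib] at h
    have h2 : (2 : ZMod p) * ∑ k : ZMod p, k = 0 := by linear_combination h
    have h2ne : (2 : ZMod p) ≠ 0 := by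
      have : ((2 : ℕ) : ZMod p) ≠ 0 := by
        rw [Ne, ZMod.natCast_eq_zero_iff]
        intro hdvd
        exact hp ((Nat.prime_dvd_prime_iff_eq hpp Nat.prime_two).mp hdvd)
      simpa using this
    rcases mul_eq_zero.mp h2 with h' | h'
    · exact absurd h' h2ne
    · exact h'
  have hinv : ∑ k ∈ Finset.univ.erase (0 : ZMod p), (k⁻¹ : ZMod p) = 0 := by
    rw [Finset.sum_erase _ (by simp)]
    have : (∑ k : ZMod p, k⁻¹) = ∑ k : ZMod p, k :=
      Fintype.sum_equiv (Function.Involutive.toPerm _ inv_involutive) _ _ (fun k => rfl)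
    rw [this, hzero]
  constructor
  · intro i j hij
    rw [map_sub]
    linear_combination (δ i) * h1 j - (δ j) * h1 i
  · intro i
    have hXi : (X - C i : Polynomial (ZMod p)) ≠ 0 := X_sub_C_ne_zero i
    apply mul_left_cancel₀ hXi
    have hterm : ∀ k ∈ Finset.univ.erase (0 : ZMod p),
        (X - C i) * (C k⁻¹ * δ (i + k))
          = -(C k⁻¹ * ((X : Polynomial (ZMod p)) ^ p - X)) + δ (i + k) := by
      intro k hk
      have hk0 : k ≠ 0 := Finset.ne_of_mem_erase hk
      have e1 : (C k⁻¹ * C k : Polynomial (ZMod p)) = 1 := by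
        rw [← C_mul, inv_mul_cancel₀ hk0, C_1]
      have e2 : (C (i + k) : Polynomial (ZMod p)) = C i + C k := C_add
      linear_combination (C k⁻¹) * h1 (i + k) + δ (i + k) * e1 + C k⁻¹ * δ (i + k) * e2
    have hsum2 : ∑ k ∈ Finset.univ.erase (0 : ZMod p), δ (i + k) = 1 - δ i := by
      rw [Finset.sum_erase_eq_sub (Finset.mem_univ 0)]
      have : (∑ k : ZMod p, δ (i + k)) = ∑ m : ZMod p, δ m :=
        Fintype.sum_equiv (Equiv.addLeft i) _ _ (fun k => rfl)
      rw [this, hsum, add_zero]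
    have hS : (X - C i) * (∑ k ∈ Finset.univ.erase (0 : ZMod p), C k⁻¹ * δ (i + k))
        = 1 - δ i := by
      rw [Finset.mul_sum, Finset.sum_congr rfl hterm, Finset.sum_add_distrib, hsum2]
      have : ∑ k ∈ Finset.univ.erase (0 : ZMod p),
          -(C k⁻¹ * ((X : Polynomial (ZMod p)) ^ p - X)) = 0 := by
        rw [Finset.sum_neg_distrib, ← Finset.sum_mul, ← map_sum, hinv]
        simp
      rw [this, zero_add]
    linear_combination (δ i - 1) * h1 i - ((X : Polynomial (ZMod p)) ^ p - X) * hS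
end

section
/- Let p be an odd prime and R = (ZMod p)[L]/(L^p). Let e = Σ_{i=0}^{p−1} (i!)⁻¹ · L^i ∈ R be the truncated exponential (with (i!)⁻¹ the inverse of i! in ZMod p) and let ln(u) = −Σ_{i=1}^{p−1} i⁻¹ · u^i for u ∈ R. Then: (a) e^p = 1 in R; (b) ln(e) = L‾, the class of L in R; and (c) the (ZMod p)-algebra homomorphism (ZMod p)[t]/(t^p − 1) → R sending the class of t to e (well-defined by (a)) is an algebra isomorphism. -/
/-!
Over a field of characteristic `p` every `k!` with `k < p` is invertible, so comparing coefficients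
below degree `p` the binomial theorem gives `E(a) E(b) ≡ E(a + b) mod X ^ p` for the truncated
exponentials `E(a) = ∑_{k<p} a^k X^k / k!`. Hence `a ↦ E(a)` is an additive character of the
field with values in `K[X]/(X^p)`, and `e ^ p = E(p) = E(0) = 1`. Then `e ^ i = E(i)`, and the
degree-`d` coefficient of `ln e` is `-(1/d!) ∑_{u ∈ 𝔽ₚˣ} u⁻¹ u^d`, a power sum over `𝔽ₚˣ` which is
`-1` for `d = 1` and `0` otherwise when `p` is odd. Finally `ln` applied to `t` shows that `L` lies
in the image of `t ↦ e`, so this map is onto; both algebras have dimension `p`.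
-/

open Polynomial Finset

section TruncatedExp

variable {K : Type*} [Field K]

lemma natCast_factorial_ne_zero_of_lt (p : ℕ) [Fact p.Prime] [CharP K p] {k : ℕ} (hk : k < p) :
    (k.factorial : K) ≠ 0 := by
  rw [Ne, CharP.cast_eq_zero_iff K p, Nat.Prime.dvd_factorial Fact.out]
  omega

noncomputable def truncExp (p : ℕ) (a : K) : K[X] :=
  ∑ k ∈ range p, C (a ^ k * (k.factorial : K)⁻¹) * X ^ k

lemma coeff_truncExp (p : ℕ) (a : K) {k : ℕ} (hk : k < p) :
    (truncExp p a).coeff k = a ^ k * (k.factorial : K)⁻¹ := by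
  simp only [truncExp, finsetSum_coeff, coeff_C_mul_X_pow]
  rw [sum_ite_eq, if_pos (mem_range.2 hk)]

lemma truncExp_zero (p : ℕ) [NeZero p] : truncExp p (0 : K) = 1 := by
  rw [truncExp, sum_eq_single_of_mem 0 (mem_range.2 (NeZero.pos p))]
  · simp
  · intro k _ hk
    simp [zero_pow hk]

/-- The binomial theorem, read coefficientwise below degree `p`, where `k!` is invertible. -/
lemma X_pow_dvd_truncExp_mul_truncExp_sub (p : ℕ) [Fact p.Prime] [CharP K p] (a b : K) :
    X ^ p ∣ truncExp p a * truncExp p b - truncExp p (a + b) := by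
  refine (X_pow_dvd_iff).2 fun k hk => ?_
  rw [coeff_sub, sub_eq_zero, coeff_mul, Nat.sum_antidiagonal_eq_sum_range_succ_mk,
    coeff_truncExp p _ hk, add_pow, sum_mul]
  refine sum_congr rfl fun i hi => ?_
  have hik : i ≤ k := Nat.lt_succ_iff.1 (mem_range.1 hi)
  rw [coeff_truncExp p _ (by omega), coeff_truncExp p _ (by omega)]
  have hchoose : ((k.choose i * i.factorial * (k - i).factorial : ℕ) : K) = k.factorial := by
    rw [Nat.choose_mul_factorial_mul_factorial hik]
  push_cast at hchoose
  have := natCast_factorial_ne_zero_of_lt (K := K) p (k := i) (by omega)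
  have := natCast_factorial_ne_zero_of_lt (K := K) p (k := k - i) (by omega)
  have := natCast_factorial_ne_zero_of_lt (K := K) p hk
  field_simp
  linear_combination (-(a ^ i * b ^ (k - i))) * hchoose

noncomputable def truncExpChar (p : ℕ) [Fact p.Prime] [CharP K p] :
    AddChar K (AdjoinRoot (X ^ p : K[X])) where
  toFun a := AdjoinRoot.mk _ (truncExp p a)
  map_zero_eq_one' := by rw [truncExp_zero, map_one]
  map_add_eq_mul' a b := by
    rw [← map_mul, AdjoinRoot.mk_eq_mk, dvd_sub_comm]
    exact X_pow_dvd_truncExp_mul_truncExp_sub p a b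

lemma truncExpChar_apply (p : ℕ) [Fact p.Prime] [CharP K p] (a : K) :
    truncExpChar p a = AdjoinRoot.mk _ (truncExp p a) := rfl

lemma truncExpChar_pow_self (p : ℕ) [Fact p.Prime] [CharP K p] (a : K) :
    truncExpChar p a ^ p = 1 := by
  rw [← AddChar.map_nsmul_eq_pow, nsmul_eq_mul, CharP.cast_eq_zero, zero_mul,
    AddChar.map_zero_eq_one]

end TruncatedExp

theorem AdjoinRoot.bijective_of_root_mem_range {K : Type*} [Field K] {f g : K[X]}
    (hf : f ≠ 0) (hg : g ≠ 0) (hfg : f.natDegree = g.natDegree)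
    (F : AdjoinRoot f →ₐ[K] AdjoinRoot g) (hF : root g ∈ F.range) : Function.Bijective F := by
  have hsurj : Function.Surjective F := by
    refine (AlgHom.range_eq_top F).1 (eq_top_iff.2 ?_)
    rw [← adjoinRoot_eq_top]
    exact Algebra.adjoin_le (Set.singleton_subset_iff.2 hF)
  have := (powerBasis hf).finite
  have := (powerBasis hg).finite
  have hrank : Module.finrank K (AdjoinRoot f) = Module.finrank K (AdjoinRoot g) := by
    rw [(powerBasis hf).finrank, (powerBasis hg).finrank, powerBasis_dim, powerBasis_dim, hfg]
  exact ⟨(LinearMap.injective_iff_surjective_of_finrank_eq_finrank hrank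
    (f := F.toLinearMap)).2 hsurj, hsurj⟩

section TruncatedLog

variable (p : ℕ)

def truncLog {A : Type*} [Ring A] [Algebra (ZMod p) A] (u : A) : A :=
  -∑ i ∈ Icc 1 (p - 1), (i : ZMod p)⁻¹ • u ^ i

lemma AlgHom.map_truncLog {A B : Type*} [Ring A] [Ring B] [Algebra (ZMod p) A]
    [Algebra (ZMod p) B] (F : A →ₐ[ZMod p] B) (u : A) : F (truncLog p u) = truncLog p (F u) := by
  simp [truncLog, map_sum, map_smul, map_pow]

lemma sum_Icc_natCast_eq_sum_units {M : Type*} [AddCommMonoid M] [Fact p.Prime] (f : ZMod p → M) :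
    ∑ i ∈ Icc 1 (p - 1), f i = ∑ u : (ZMod p)ˣ, f u := by
  have hp := (Fact.out : p.Prime).pos
  refine sum_bij' (fun i hi ↦ Units.mk0 (i : ZMod p) ?_) (fun u _ ↦ (u : ZMod p).val)
    (fun _ _ ↦ mem_univ _) (fun u _ ↦ ?_) (fun i hi ↦ ?_)
    (fun u _ ↦ Units.ext (ZMod.natCast_zmod_val _)) (fun _ _ ↦ rfl)
  · rw [Ne, ZMod.natCast_eq_zero_iff]
    exact Nat.not_dvd_of_pos_of_lt (by grind) (by grind)
  · have := (ZMod.val_ne_zero (u : ZMod p)).2 u.ne_zero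
    have := ZMod.val_lt (u : ZMod p)
    grind
  · simp [ZMod.val_cast_of_lt (show i < p by grind)]

/-- Since `u ^ (p - 1) = 1`, the summand is `u ^ (d + p - 2)`; the power sum over the units
vanishes unless `p - 1 ∣ d + p - 2`, i.e. unless `d = 1`. -/
lemma sum_units_inv_mul_pow [Fact p.Prime] (hp : p ≠ 2) {d : ℕ} (hd : d < p) :
    ∑ u : (ZMod p)ˣ, (u : ZMod p)⁻¹ * (u : ZMod p) ^ d = if d = 1 then -1 else 0 := by
  have hp3 : 3 ≤ p := by have := (Fact.out : p.Prime).two_le; omega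
  have hsummand (u : (ZMod p)ˣ) :
      (u : ZMod p)⁻¹ * (u : ZMod p) ^ d = (u : ZMod p) ^ (d + p - 2) := by
    rw [inv_mul_eq_iff_eq_mul₀ u.ne_zero, ← pow_succ', show d + p - 2 + 1 = d + (p - 1) by omega,
      pow_add, ZMod.pow_card_sub_one_eq_one u.ne_zero, mul_one]
  simp_rw [hsummand]
  rw [FiniteField.sum_pow_units, ZMod.card]
  congr 1
  refine propext ⟨fun h ↦ ?_, fun h ↦ by subst h; rw [show 1 + p - 2 = p - 1 by omega]⟩
  have := Nat.eq_of_dvd_of_lt_two_mul (by omega) h (by omega)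
  omega

lemma truncLog_truncExpChar_one [Fact p.Prime] (hp : p ≠ 2) :
    truncLog p (truncExpChar p (1 : ZMod p)) = AdjoinRoot.root (X ^ p : (ZMod p)[X]) := by
  have hpow (i : ℕ) : truncExpChar p (1 : ZMod p) ^ i = truncExpChar p (i : ZMod p) := by
    rw [← AddChar.map_nsmul_eq_pow, nsmul_one]
  simp_rw [truncLog, hpow, truncExpChar_apply, AdjoinRoot.smul_mk, ← map_sum, ← map_neg,
    ← AdjoinRoot.mk_X, AdjoinRoot.mk_eq_mk]
  refine (X_pow_dvd_iff).2 fun d hd => ?_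
  simp only [coeff_sub, coeff_neg, finsetSum_coeff, coeff_smul, coeff_truncExp p _ hd, smul_eq_mul]
  rw [sum_Icc_natCast_eq_sum_units p fun x ↦ x⁻¹ * (x ^ d * (d.factorial : ZMod p)⁻¹)]
  simp_rw [← mul_assoc]
  rw [← sum_mul, sum_units_inv_mul_pow p hp hd, coeff_X]
  rcases eq_or_ne d 1 with rfl | hd1
  · simp
  · simp [hd1, hd1.symm]

lemma exists_algEquiv_root_eq_truncExpChar_one [Fact p.Prime] (hp : p ≠ 2) :
    ∃ F : AdjoinRoot (X ^ p - 1 : (ZMod p)[X]) ≃ₐ[ZMod p] AdjoinRoot (X ^ p : (ZMod p)[X]),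
      F (AdjoinRoot.root _) = truncExpChar p (1 : ZMod p) := by
  have hroot : aeval (truncExpChar p (1 : ZMod p)) (X ^ p - 1 : (ZMod p)[X]) = 0 := by
    simp [truncExpChar_pow_self]
  let F := AdjoinRoot.liftAlgHom _ (Algebra.ofId (ZMod p) _) _ hroot
  have hFroot : F (AdjoinRoot.root _) = truncExpChar p 1 := AdjoinRoot.liftAlgHom_root _ _ _ hroot
  have hdeg : (X ^ p - 1 : (ZMod p)[X]).natDegree = p := by
    simpa using natDegree_X_pow_sub_C (n := p) (r := (1 : ZMod p))
  have hne : (X ^ p - 1 : (ZMod p)[X]) ≠ 0 :=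
    ne_zero_of_natDegree_gt (n := 0) (hdeg.symm ▸ (Fact.out : p.Prime).pos)
  have hbij : Function.Bijective F := by
    refine AdjoinRoot.bijective_of_root_mem_range hne (pow_ne_zero _ X_ne_zero)
      (by rw [hdeg, natDegree_X_pow]) F
      ((AlgHom.mem_range F).2 ⟨truncLog p (AdjoinRoot.root _), ?_⟩)
    rw [AlgHom.map_truncLog, hFroot, truncLog_truncExpChar_one p hp]
  exact ⟨AlgEquiv.ofBijective F hbij, hFroot⟩

end TruncatedLog

theorem stmt15 (p : ℕ) [Fact p.Prime] (hp : p ≠ 2)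
    (e : Polynomial (ZMod p) ⧸ Ideal.span {(X : Polynomial (ZMod p)) ^ p})
    (he : e = Ideal.Quotient.mk (Ideal.span {(X : Polynomial (ZMod p)) ^ p})
      (∑ i ∈ Finset.range p, C ((i.factorial : ZMod p)⁻¹) * X ^ i))
    (ln : (Polynomial (ZMod p) ⧸ Ideal.span {(X : Polynomial (ZMod p)) ^ p}) →
      Polynomial (ZMod p) ⧸ Ideal.span {(X : Polynomial (ZMod p)) ^ p})
    (hln : ∀ u, ln u = -∑ i ∈ Finset.Icc 1 (p - 1), ((i : ZMod p))⁻¹ • u ^ i) :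
    e ^ p = 1 ∧
    ln e = Ideal.Quotient.mk (Ideal.span {(X : Polynomial (ZMod p)) ^ p}) X ∧
    ∃ φ : (Polynomial (ZMod p) ⧸ Ideal.span {(X : Polynomial (ZMod p)) ^ p - 1})
        ≃ₐ[ZMod p] (Polynomial (ZMod p) ⧸ Ideal.span {(X : Polynomial (ZMod p)) ^ p}),
      φ (Ideal.Quotient.mk (Ideal.span {(X : Polynomial (ZMod p)) ^ p - 1}) X) = e := by
  have he' : e = truncExpChar p (1 : ZMod p) := by
    simp only [he, truncExpChar_apply, truncExp, one_pow, one_mul]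
    rfl
  subst he'
  exact ⟨truncExpChar_pow_self p 1, (hln _).trans (truncLog_truncExpChar_one p hp),
    exists_algEquiv_root_eq_truncExpChar_one p hp⟩
end

section
/- Let p be a prime, μ ∈ ZMod p with μ ≠ 0, and R = (ZMod p)[X]/(X^p − X). Let ∂ : R → R be the (ZMod p)-linear map induced by f ↦ μ⁻¹ · (f.comp (X + C μ) − f) (well-defined since X^p − X is invariant under X ↦ X+μ). Then the kernel of ∂ is the one-dimensional subspace spanned by 1, and the class of X^{p−1} does not lie in the range of ∂ (so the range of ∂ has dimension p−1 and R = range ∂ ⊕ span{X^{p−1}}). -/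
/-!
Since `X ^ p - X = ∏ a, (X - a)`, two polynomials have the same class in `R` exactly when they
agree as functions on `ZMod p`, so `∂` is the difference operator `φ ↦ μ⁻¹ (φ (· + μ) - φ)` on
functions. A function it kills is `μ`-periodic, hence constant because `μ` generates `ZMod p`.
A difference `φ (· + μ) - φ` sums to zero over `ZMod p`, whereas `∑ a, a ^ (p - 1) = p - 1 = -1`.
-/

open Polynomial

namespace FiniteField

variable {K : Type*} [Field K] [Fintype K]

theorem X_pow_card_sub_X_eq_prod : (X ^ Fintype.card K - X : K[X]) = ∏ a : K, (X - C a) := by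
  have hq : 1 < Fintype.card K := Fintype.one_lt_card
  have hmonic : (X ^ Fintype.card K - X : K[X]).Monic :=
    (monic_X_pow _).sub_of_left (by rw [degree_X_pow, degree_X]; exact_mod_cast hq)
  have hcard : Multiset.card (X ^ Fintype.card K - X : K[X]).roots
      = (X ^ Fintype.card K - X : K[X]).natDegree := by
    rw [roots_X_pow_card_sub_X, X_pow_card_sub_X_natDegree_eq _ hq]; rfl
  rw [← prod_multiset_X_sub_C_of_monic_of_roots_card_eq hmonic hcard, roots_X_pow_card_sub_X]
  rfl

theorem X_pow_card_sub_X_dvd_iff {f : K[X]} :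
    X ^ Fintype.card K - X ∣ f ↔ ∀ a, f.eval a = 0 := by
  refine ⟨fun ⟨g, hg⟩ a => by simp [hg, pow_card], fun h => ?_⟩
  rw [X_pow_card_sub_X_eq_prod]
  exact Fintype.prod_dvd_of_coprime (pairwise_coprime_X_sub_C Function.injective_id)
    fun a => dvd_iff_isRoot.mpr (h a)

theorem sum_pow_card_sub_one : ∑ a : K, a ^ (Fintype.card K - 1) = -1 := by
  classical
  have hq : 1 < Fintype.card K := Fintype.one_lt_card
  rw [← Finset.sum_erase_add _ _ (Finset.mem_univ 0), zero_pow (by omega), add_zero,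
    Finset.sum_congr rfl fun a ha => pow_card_sub_one_eq_one a (Finset.ne_of_mem_erase ha)]
  simp [Finset.card_erase_of_mem, Nat.cast_sub hq.le]

end FiniteField

theorem Ideal.Quotient.mk_span_X_pow_sub_X_eq_iff {K : Type*} [Field K] [Fintype K] {q : ℕ}
    (hq : Fintype.card K = q) {f g : K[X]} :
    Ideal.Quotient.mk (Ideal.span {X ^ q - X}) f = Ideal.Quotient.mk _ g ↔
      ∀ a, f.eval a = g.eval a := by
  subst hq
  simp only [Ideal.Quotient.eq, Ideal.mem_span_singleton, FiniteField.X_pow_card_sub_X_dvd_iff,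
    eval_sub, sub_eq_zero]

theorem ZMod.apply_eq_apply_zero_of_periodic {α : Type*} {p : ℕ} [Fact p.Prime]
    {φ : ZMod p → α} {μ : ZMod p} (hμ : μ ≠ 0) (h : Function.Periodic φ μ) (a : ZMod p) :
    φ a = φ 0 := by
  have ha : a = 0 + (a * μ⁻¹).val • μ := by
    rw [zero_add, nsmul_eq_mul, ZMod.natCast_val, ZMod.cast_id, mul_assoc, inv_mul_cancel₀ hμ,
      mul_one]
  rw [ha, h.nsmul]

theorem Fintype.sum_sub_comp_add_eq_zero {G M : Type*} [AddGroup G] [Fintype G] [AddCommGroup M]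
    (φ : G → M) (μ : G) : ∑ a, (φ (a + μ) - φ a) = 0 := by
  rw [Finset.sum_sub_distrib, sub_eq_zero]
  exact Fintype.sum_equiv (Equiv.addRight μ) _ _ fun _ => rfl

theorem stmt17 (p : ℕ) [Fact p.Prime] (μ : ZMod p) (hμ : μ ≠ 0)
    (D : (Polynomial (ZMod p) ⧸ Ideal.span {(X : Polynomial (ZMod p)) ^ p - X}) →ₗ[ZMod p]
         (Polynomial (ZMod p) ⧸ Ideal.span {(X : Polynomial (ZMod p)) ^ p - X}))
    (hD : ∀ f : Polynomial (ZMod p),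
      D (Ideal.Quotient.mk (Ideal.span {(X : Polynomial (ZMod p)) ^ p - X}) f) =
        Ideal.Quotient.mk (Ideal.span {(X : Polynomial (ZMod p)) ^ p - X})
          (C μ⁻¹ * (f.comp (X + C μ) - f))) :
    LinearMap.ker D =
      Submodule.span (ZMod p)
        {(1 : Polynomial (ZMod p) ⧸ Ideal.span {(X : Polynomial (ZMod p)) ^ p - X})} ∧
    Ideal.Quotient.mk (Ideal.span {(X : Polynomial (ZMod p)) ^ p - X}) (X ^ (p - 1)) ∉
      LinearMap.range D := by
  have hmk {f g : (ZMod p)[X]} :=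
    Ideal.Quotient.mk_span_X_pow_sub_X_eq_iff (ZMod.card p) (f := f) (g := g)
  refine ⟨le_antisymm (fun y hy => ?_) ?_, ?_⟩
  · obtain ⟨f, rfl⟩ := Ideal.Quotient.mk_surjective y
    rw [LinearMap.mem_ker, hD, ← map_zero (Ideal.Quotient.mk _), hmk] at hy
    have hper : Function.Periodic (f.eval ·) μ := fun a => by simpa [hμ, sub_eq_zero] using hy a
    -- `c • mk 1` unfolds to `mk (c • 1)`
    refine Submodule.mem_span_singleton.mpr
      ⟨f.eval 0, (hmk.mpr fun a => ?_ : Ideal.Quotient.mk _ (f.eval 0 • (1 : (ZMod p)[X])) = _)⟩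
    simpa using (ZMod.apply_eq_apply_zero_of_periodic hμ hper a).symm
  · rw [Submodule.span_le, Set.singleton_subset_iff, SetLike.mem_coe, LinearMap.mem_ker,
      ← map_one (Ideal.Quotient.mk _), hD]
    simp
  · rintro ⟨y, hy⟩
    obtain ⟨g, rfl⟩ := Ideal.Quotient.mk_surjective y
    rw [hD, hmk] at hy
    simp only [eval_mul, eval_C, eval_sub, eval_comp, eval_add, eval_X, eval_pow] at hy
    have : (-1 : ZMod p) = 0 := calc
      -1 = ∑ a : ZMod p, a ^ (p - 1) := (ZMod.card p ▸ FiniteField.sum_pow_card_sub_one).symm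
      _ = ∑ a, μ⁻¹ * (g.eval (a + μ) - g.eval a) := Finset.sum_congr rfl fun a _ => (hy a).symm
      _ = 0 := by rw [← Finset.mul_sum, Fintype.sum_sub_comp_add_eq_zero (g.eval ·), mul_zero]
    exact neg_ne_zero.mpr one_ne_zero this
end

section
/- Let R = (ZMod 2)[X]/(X^4 + X). Then: (a) every a ∈ R satisfies a^4 = a; (b) R is a reduced ring; and (c) the set B = {a ∈ R : a^2 = a} of idempotents is a (ZMod 2)-subalgebra of R with finrank (ZMod 2) B = 3, containing the orthogonal idempotents e₁ = x² + x, e₃ = x³ + 1, e₂ = 1 + e₁ + e₃ (where x is the class of X), which satisfy e_i e_j = 0 for i ≠ j and e₁ + e₂ + e₃ = 1. -/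
open Polynomial

noncomputable section StmtAux

abbrev Rq19 := Polynomial (ZMod 2) ⧸ Ideal.span {(X : Polynomial (ZMod 2)) ^ 4 + X}

lemma fpoly_deg19 : (X ^ 4 + X : Polynomial (ZMod 2)).natDegree = 4 := by
  compute_degree!

lemma fpoly_ne19 : (X ^ 4 + X : Polynomial (ZMod 2)) ≠ 0 := by
  intro h
  have := congrArg (fun q => Polynomial.coeff q 1) h
  simp at this

lemma mk_ne_zero19 (p : Polynomial (ZMod 2)) (hp : p ≠ 0) (hd : p.natDegree < 4) :
    Ideal.Quotient.mk (Ideal.span {(X : Polynomial (ZMod 2)) ^ 4 + X}) p ≠ 0 := by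
  intro h
  rw [Ideal.Quotient.eq_zero_iff_mem, Ideal.mem_span_singleton] at h
  have h1 := Polynomial.natDegree_le_of_dvd h hp
  have h2 := fpoly_deg19
  omega

lemma h2R19 : (2 : Rq19) = 0 := by
  have h : (2 : Rq19) = algebraMap (ZMod 2) Rq19 2 := by rw [map_ofNat]
  rw [h, show (2 : ZMod 2) = 0 from rfl, map_zero]

lemma hx419 : (Ideal.Quotient.mk (Ideal.span {(X : Polynomial (ZMod 2)) ^ 4 + X}) X) ^ 4
    = Ideal.Quotient.mk (Ideal.span {(X : Polynomial (ZMod 2)) ^ 4 + X}) X := by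
  have h : Ideal.Quotient.mk (Ideal.span {(X : Polynomial (ZMod 2)) ^ 4 + X}) (X ^ 4 + X) = 0 := by
    rw [Ideal.Quotient.eq_zero_iff_mem]
    exact Ideal.subset_span rfl
  rw [map_add, map_pow] at h
  set y := Ideal.Quotient.mk (Ideal.span {(X : Polynomial (ZMod 2)) ^ 4 + X}) X
  linear_combination h - y * h2R19

lemma key19 : ∀ a : Rq19, a ^ 4 = a := by
  have h2 := h2R19
  have ha4 : ∀ b : ZMod 2, b ^ 4 = b := by decide
  intro a
  obtain ⟨p, rfl⟩ := Ideal.Quotient.mk_surjective a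
  induction p using Polynomial.induction_on' with
  | add p q hp hq =>
    rw [map_add]
    set s := Ideal.Quotient.mk (Ideal.span {(X : Polynomial (ZMod 2)) ^ 4 + X}) p
    set t := Ideal.Quotient.mk (Ideal.span {(X : Polynomial (ZMod 2)) ^ 4 + X}) q
    linear_combination hp + hq + (2 * s ^ 3 * t + 3 * s ^ 2 * t ^ 2 + 2 * s * t ^ 3) * h2
  | monomial n a =>
    rw [← Polynomial.C_mul_X_pow_eq_monomial, map_mul, map_pow, mul_pow, ← pow_mul,
      mul_comm n 4, pow_mul, hx419, ← map_pow, ← Polynomial.C_pow, ha4 a]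

lemma red19 : IsReduced Rq19 := by
  constructor
  intro a ⟨k, hk⟩
  have hpow : ∀ m : ℕ, a ^ (3 * m + 1) = a := by
    intro m
    induction m with
    | zero => simp
    | succ m ih =>
      have : 3 * (m + 1) + 1 = (3 * m + 1) + 3 := by ring
      rw [this, pow_add, ih]
      linear_combination key19 a
  have := hpow k
  rw [show 3 * k + 1 = (2 * k + 1) + k by ring, pow_add, hk, mul_zero] at this
  exact this.symm

def phi19 : Rq19 →ₗ[ZMod 2] Rq19 where
  toFun a := a ^ 2 + a
  map_add' a b := by linear_combination a * b * h2R19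
  map_smul' c a := by
    have hc : ∀ c : ZMod 2, c ^ 2 = c := by decide
    simp only [_root_.smul_pow, hc, smul_add, RingHom.id_apply]

def pb19 : PowerBasis (ZMod 2) Rq19 := AdjoinRoot.powerBasis fpoly_ne19

lemma pb_dim19 : pb19.dim = 4 := by
  simp [pb19, AdjoinRoot.powerBasis, fpoly_deg19]

instance : Module.Finite (ZMod 2) Rq19 := Module.Finite.of_basis pb19.basis

lemma finrank_Rq19 : Module.finrank (ZMod 2) Rq19 = 4 := by
  rw [Module.finrank_eq_card_basis pb19.basis, Fintype.card_fin, pb_dim19]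

lemma range_phi19 : LinearMap.range phi19 =
    Submodule.span (ZMod 2)
      {(Ideal.Quotient.mk (Ideal.span {(X : Polynomial (ZMod 2)) ^ 4 + X}) X) ^ 2
        + Ideal.Quotient.mk (Ideal.span {(X : Polynomial (ZMod 2)) ^ 4 + X}) X} := by
  set y := Ideal.Quotient.mk (Ideal.span {(X : Polynomial (ZMod 2)) ^ 4 + X}) X with hy
  apply le_antisymm
  · rw [← Submodule.map_top, ← pb19.basis.span_eq, Submodule.map_span, Submodule.span_le]
    rintro _ ⟨_, ⟨i, rfl⟩, rfl⟩
    have hb : pb19.basis i = y ^ (i : ℕ) := pb19.basis_eq_pow i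
    have hphi : ∀ a : Rq19, phi19 a = a ^ 2 + a := fun a => rfl
    rw [SetLike.mem_coe, hphi, hb]
    have hn : (i : ℕ) < 4 := by have h := i.isLt; have hd := pb_dim19; omega
    set n := (i : ℕ) with hnn
    clear_value n
    interval_cases n
    · simp only [pow_zero, one_pow]
      rw [show (1 : Rq19) + 1 = 2 by ring, h2R19]
      exact zero_mem _
    · simpa using Submodule.mem_span_singleton_self _
    · rw [← pow_mul, show (2 * 2 = 4) from rfl, hx419,
        show y + y ^ 2 = y ^ 2 + y from add_comm _ _]
      exact Submodule.mem_span_singleton_self _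
    · have h6 : (y ^ 3) ^ 2 = y ^ 3 := by linear_combination y ^ 2 * hx419
      rw [h6, show y ^ 3 + y ^ 3 = 2 * y ^ 3 by ring, h2R19, zero_mul]
      exact zero_mem _
  · rw [Submodule.span_le, Set.singleton_subset_iff]
    exact ⟨y, rfl⟩

lemma e1_ne19 : (Ideal.Quotient.mk (Ideal.span {(X : Polynomial (ZMod 2)) ^ 4 + X}) X) ^ 2
    + Ideal.Quotient.mk (Ideal.span {(X : Polynomial (ZMod 2)) ^ 4 + X}) X ≠ 0 := by
  have heq : (Ideal.Quotient.mk (Ideal.span {(X : Polynomial (ZMod 2)) ^ 4 + X}) X) ^ 2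
      + Ideal.Quotient.mk (Ideal.span {(X : Polynomial (ZMod 2)) ^ 4 + X}) X
      = Ideal.Quotient.mk (Ideal.span {(X : Polynomial (ZMod 2)) ^ 4 + X}) (X ^ 2 + X) := by
    rw [map_add, map_pow]
  rw [heq]
  apply mk_ne_zero19
  · intro h
    have := congrArg (fun q => Polynomial.coeff q 1) h
    simp at this
  · have h : (X ^ 2 + X : Polynomial (ZMod 2)).natDegree ≤ 2 := by compute_degree
    omega

lemma finrank_ker19 : Module.finrank (ZMod 2) (LinearMap.ker phi19) = 3 := by
  have h := LinearMap.finrank_range_add_finrank_ker phi19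
  rw [finrank_Rq19] at h
  have hr : Module.finrank (ZMod 2) (LinearMap.range phi19) = 1 := by
    rw [range_phi19]
    exact finrank_span_singleton e1_ne19
  omega

def B19 : Subalgebra (ZMod 2) Rq19 where
  carrier := {a : Rq19 | a ^ 2 = a}
  mul_mem' := by
    intro a b ha hb
    show (a * b) ^ 2 = a * b
    rw [mul_pow]
    rw [show a ^ 2 = a from ha, show b ^ 2 = b from hb]
  one_mem' := one_pow 2
  add_mem' := by
    intro a b ha hb
    show (a + b) ^ 2 = a + b
    have ha' : a ^ 2 = a := ha
    have hb' : b ^ 2 = b := hb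
    linear_combination ha' + hb' + a * b * h2R19
  zero_mem' := zero_pow (by norm_num)
  algebraMap_mem' := by
    intro r
    have hc : ∀ r : ZMod 2, r ^ 2 = r := by decide
    show (algebraMap (ZMod 2) Rq19 r) ^ 2 = algebraMap (ZMod 2) Rq19 r
    rw [← map_pow, hc r]

lemma B19_toSubmodule : Subalgebra.toSubmodule B19 = LinearMap.ker phi19 := by
  ext a
  simp only [Subalgebra.mem_toSubmodule, LinearMap.mem_ker]
  show a ^ 2 = a ↔ phi19 a = 0
  constructor
  · intro h
    show a ^ 2 + a = 0
    linear_combination h + a * h2R19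
  · intro h
    have h' : a ^ 2 + a = 0 := h
    linear_combination h' - a * h2R19

lemma finrank_B19 : Module.finrank (ZMod 2) B19 = 3 := by
  have e := LinearEquiv.ofEq _ _ B19_toSubmodule
  have h := e.finrank_eq
  exact h.trans finrank_ker19

end StmtAux

set_option maxHeartbeats 1000000 in
set_option synthInstance.maxHeartbeats 400000 in
theorem stmt19
    (x : Polynomial (ZMod 2) ⧸ Ideal.span {(X : Polynomial (ZMod 2)) ^ 4 + X})
    (hx : x = Ideal.Quotient.mk (Ideal.span {(X : Polynomial (ZMod 2)) ^ 4 + X}) X) :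
    (∀ a : Polynomial (ZMod 2) ⧸ Ideal.span {(X : Polynomial (ZMod 2)) ^ 4 + X},
      a ^ 4 = a) ∧
    IsReduced (Polynomial (ZMod 2) ⧸ Ideal.span {(X : Polynomial (ZMod 2)) ^ 4 + X}) ∧
    ∃ B : Subalgebra (ZMod 2)
        (Polynomial (ZMod 2) ⧸ Ideal.span {(X : Polynomial (ZMod 2)) ^ 4 + X}),
      (B : Set (Polynomial (ZMod 2) ⧸ Ideal.span {(X : Polynomial (ZMod 2)) ^ 4 + X})) =
        {a | a ^ 2 = a} ∧
      Module.finrank (ZMod 2) B = 3 ∧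
      (x ^ 2 + x) ∈ B ∧ (x ^ 3 + 1) ∈ B ∧
      (1 + (x ^ 2 + x) + (x ^ 3 + 1)) ∈ B ∧
      (x ^ 2 + x) * (1 + (x ^ 2 + x) + (x ^ 3 + 1)) = 0 ∧
      (x ^ 2 + x) * (x ^ 3 + 1) = 0 ∧
      (1 + (x ^ 2 + x) + (x ^ 3 + 1)) * (x ^ 3 + 1) = 0 ∧
      (x ^ 2 + x) + (1 + (x ^ 2 + x) + (x ^ 3 + 1)) + (x ^ 3 + 1) = 1 := by
  subst hx
  set y := Ideal.Quotient.mk (Ideal.span {(X : Polynomial (ZMod 2)) ^ 4 + X}) X with hy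
  have h2 : (2 : Rq19) = 0 := h2R19
  have hx4 : y ^ 4 = y := hx419
  have hc : ∀ r : ZMod 2, r ^ 2 = r := by decide
  refine ⟨key19, red19, ?_⟩
  refine ⟨B19, rfl, finrank_B19, ?_, ?_, ?_, ?_, ?_, ?_, ?_⟩
  · show (y ^ 2 + y) ^ 2 = y ^ 2 + y
    linear_combination hx4 + y ^ 3 * h2
  · show (y ^ 3 + 1) ^ 2 = y ^ 3 + 1
    linear_combination y ^ 2 * hx4 + y ^ 3 * h2
  · show (1 + (y ^ 2 + y) + (y ^ 3 + 1)) ^ 2 = 1 + (y ^ 2 + y) + (y ^ 3 + 1)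
    linear_combination (y ^ 2 + 2 * y + 3) * hx4 + (3 * y ^ 3 + 3 * y ^ 2 + 3 * y + 1) * h2
  · linear_combination (y + 2) * hx4 + (y ^ 3 + 2 * y ^ 2 + 2 * y) * h2
  · linear_combination (y + 1) * hx4 + (y ^ 2 + y) * h2
  · linear_combination (y ^ 2 + y + 1) * hx4 + (2 * y ^ 3 + y ^ 2 + y + 1) * h2
  · linear_combination (y ^ 3 + y ^ 2 + y + 1) * h2
end
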